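/- arXiv:1204.3926 — 8 statements merged into one kernel-verified Lean document; each statement's English description precedes it below -/
import Mathlib

section
/- If {L_k : k ∈ K} is a chain (under inclusion) of finitely injective submodules of a module E, then the union L = ⋃_{k ∈ K} L_k is finitely injective. -/
/-- A module `M` is finitely injective if every finite subset of `M` is contained in an
injective submodule of `M`. -/
def FinitelyInjective (R : Type*) [Ring R] (M : Type*) [AddCommGroup M] [Module R M] : Prop :=
  ∀ s : Finset M, ∃ N : Submodule R M, Module.Injective R N ∧ ∀ x ∈ s, x ∈ N

universe uA in
lemma Module.Injective.of_equiv' (R : Type*) [Ring R] {A B : Type uA} [AddCommGroup A] [Module R A]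
    [AddCommGroup B] [Module R B] (e : A ≃ₗ[R] B) (h : Module.Injective R A) :
    Module.Injective R B where
  out X Y _ _ _ _ f hf g := by
    obtain ⟨h', hh'⟩ := h.out f hf ((e.symm.toLinearMap ∘ₗ g : X →ₗ[R] A))
    refine ⟨e.toLinearMap ∘ₗ h', fun x => ?_⟩
    have := hh' x
    simp only [LinearMap.comp_apply, LinearEquiv.coe_coe] at this ⊢
    rw [this]; simp

theorem finitelyInjective_iSup_of_chain (R : Type*) [Ring R] {E : Type*} [AddCommGroup E]
    [Module R E] {K : Type*} (L : K → Submodule R E)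
    (hchain : IsChain (· ≤ ·) (Set.range L))
    (hfi : ∀ k, FinitelyInjective R (L k)) :
    FinitelyInjective R ↥(⨆ k, L k) := by
  classical
  intro s
  cases isEmpty_or_nonempty K with
  | inl hK =>
    refine ⟨⊥, ?_, fun x _ => ?_⟩
    · constructor
      intro X Y _ _ _ _ f hf g
      exact ⟨0, fun x => Subsingleton.elim _ _⟩
    · have : (⨆ k, L k) = ⊥ := by simp [iSup_of_empty]
      have hx : (x : E) ∈ (⊥ : Submodule R E) := this ▸ x.2
      have : x = 0 := Subtype.ext (by simpa using hx)
      simp [this]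
  | inr hK =>
    have hdir : Directed (· ≤ ·) L := by
      intro i j
      rcases eq_or_ne (L i) (L j) with h | h
      · exact ⟨j, h.le, le_refl _⟩
      · rcases hchain ⟨i, rfl⟩ ⟨j, rfl⟩ h with h' | h'
        · exact ⟨j, h', le_refl _⟩
        · exact ⟨i, le_refl _, h'⟩
    -- each element of s lies in some L k
    have hmem : ∀ x : ↥(⨆ k, L k), ∃ k, (x : E) ∈ L k := fun x =>
      (Submodule.mem_iSup_of_directed L hdir).1 x.2
    choose ι hι using hmem
    obtain ⟨k, hk⟩ := hdir.finset_le (s.image ι)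
    have hsk : ∀ x ∈ s, (x : E) ∈ L k := fun x hx =>
      hk (ι x) (Finset.mem_image_of_mem ι hx) (hι x)
    -- the finset of preimages in L k
    set t : Finset ↥(L k) := s.attach.image (fun x => ⟨(x.1 : E), hsk x.1 x.2⟩) with ht
    obtain ⟨N, hNinj, hNmem⟩ := hfi k t
    -- map N into ⨆ k, L k
    have hle : L k ≤ ⨆ k, L k := le_iSup L k
    let e : ↥(L k) →ₗ[R] ↥(⨆ k, L k) := Submodule.inclusion hle
    refine ⟨N.map e, ?_, fun x hx => ?_⟩
    · refine Module.Injective.of_equiv' R (Submodule.equivMapOfInjective e (Submodule.inclusion_injective hle) N) hNinj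
    · refine ⟨⟨(x : E), hsk x hx⟩, hNmem _ (Finset.mem_image_of_mem _ (s.mem_attach ⟨x, hx⟩)), rfl⟩
end

section
/- Let L = ⊕_{t∈T} E_t with each E_t injective, I a left ideal of R, and f : I → L a homomorphism. Suppose the set T' = {t ∈ T : q_t ∘ f ≠ 0} is infinite, where q_t : L → E_t is the canonical projection. If T_1 ⊆ T' is an infinite subset, then the composite of f with the projection onto ⊕_{t∈T_1} E_t cannot be extended to a homomorphism R → ⊕_{t∈T_1} E_t. -/
open DirectSum

open Classical in
/-- The canonical projection from `⨁ t : T, E t` onto the subsum `⨁ t : T₁, E t`. -/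
noncomputable def subsumProj (R : Type*) [Ring R] {T : Type*} (E : T → Type*)
    [∀ t, AddCommGroup (E t)] [∀ t, Module R (E t)] (T₁ : Set T) :
    (⨁ t, E t) →ₗ[R] ⨁ s : T₁, E s :=
  DirectSum.toModule R T _ fun t =>
    if h : t ∈ T₁ then DirectSum.lof R T₁ (fun s : T₁ => E s) ⟨t, h⟩ else 0

open Classical in
lemma subsumProj_component (R : Type*) [Ring R] {T : Type*} (E : T → Type*)
    [∀ t, AddCommGroup (E t)] [∀ t, Module R (E t)] (T₁ : Set T)
    (t : T) (h : t ∈ T₁) (v : ⨁ t, E t) :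
    DirectSum.component R T₁ (fun s : T₁ => E s) ⟨t, h⟩ (subsumProj R E T₁ v)
      = DirectSum.component R T E t v := by
  induction v using DirectSum.induction_on with
  | zero => simp
  | of j x =>
    rw [show (DirectSum.of E j x) = DirectSum.lof R T E j x from rfl]
    rw [subsumProj, DirectSum.toModule_lof]
    by_cases hj : j ∈ T₁
    · rw [dif_pos hj]
      rcases eq_or_ne j t with rfl | hne
      · simp [DirectSum.component.lof_self]
      · rw [DirectSum.component.of, DirectSum.component.of, dif_neg, dif_neg hne]
        simp [Subtype.ext_iff, hne]
    · rw [dif_neg hj]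
      have hne : j ≠ t := fun e => hj (e ▸ h)
      rw [DirectSum.component.of, dif_neg hne]
      simp
  | add a b ha hb => simp [map_add, ha, hb]

theorem not_extends_subsumProj (R : Type*) [Ring R] {T : Type*}
    (E : T → Type*) [∀ t, AddCommGroup (E t)] [∀ t, Module R (E t)]
    [∀ t, Module.Injective R (E t)]
    (I : Ideal R) (f : I →ₗ[R] ⨁ t, E t)
    (hinf : {t : T | (DirectSum.component R T E t).comp f ≠ 0}.Infinite)
    (T₁ : Set T) (hT₁ : T₁ ⊆ {t : T | (DirectSum.component R T E t).comp f ≠ 0})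
    (hT₁inf : T₁.Infinite) :
    ¬ ∃ g : R →ₗ[R] ⨁ s : T₁, E s, ∀ x : I, g (x : R) = subsumProj R E T₁ (f x) := by
  classical
  rintro ⟨g, hg⟩
  set a := g 1 with ha
  have hfin : (Subtype.val '' {s : T₁ | a s ≠ 0}).Finite := by
    apply Set.Finite.image
    exact (DFinsupp.support (a : Π₀ s : T₁, E s)).finite_toSet.subset
      (fun s hs => DFinsupp.mem_support_iff.2 hs)
  obtain ⟨t, htT₁, htS⟩ := (hT₁inf.diff hfin).nonempty
  have hat : a ⟨t, htT₁⟩ = 0 := by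
    by_contra hne
    exact htS ⟨⟨t, htT₁⟩, hne, rfl⟩
  have hzero : (DirectSum.component R T E t).comp f = 0 := by
    ext x
    have h1 : g (x : R) = (x : R) • a := by
      rw [ha, ← map_smul, smul_eq_mul, mul_one]
    have h2 := hg x
    rw [h1] at h2
    have h3 := congrArg (DirectSum.component R T₁ (fun s : T₁ => E s) ⟨t, htT₁⟩) h2
    rw [map_smul, ← DirectSum.apply_eq_component, hat, smul_zero,
      subsumProj_component] at h3
    simpa using h3.symm
  exact hT₁ htT₁ hzero
end

section
/- If M is a Σ-injective left R-module, then the union of any chain of direct summands of M^(ℵ₀) (the countable direct sum of copies of M) is a direct summand of M^(ℵ₀). -/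
/-!
Write `Q = M^(ℵ₀)`; both `Q` and `Q^(ℵ₀)` are direct sums of copies of `M`, hence injective.
We show that the union `U` of the chain is injective, so that it splits off.
By Zorn's lemma it suffices to extend partial maps into `U` by a single vector `y`, i.e. to
extend maps `D → U` with `D ≤ R y`. Such a map already lands in one member `N` of the chain,
which is injective as a summand of `Q`. Otherwise there is a strictly increasing sequence
`T₀ < T₁ < ⋯` in the chain with `D` not mapping into any `Tₙ`. On the elements of `D` sent into
`⋃ Tₙ`, the differences `πₙ₊₁ - πₙ` of projections onto the `Tₙ` are finitely supported and
give a map to `Q^(ℵ₀)`; extending it to `R y`, the image of `y` has finite support, so the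
sequence stabilises on the image of `D`.
-/

open DirectSum

/-- An injective module `M` is `Σ`-injective if every direct sum of copies of `M`
is injective. -/
def SigmaInjective (R : Type u) [Ring R] (M : Type v) [AddCommGroup M] [Module R M] : Prop :=
  ∀ ι : Type v, Module.Injective R (⨁ _ : ι, M)

universe u v

section

variable {R : Type u} [Ring R]

section

variable {A B : Type v} [AddCommGroup A] [Module R A] [AddCommGroup B] [Module R B]

theorem Module.Injective.of_linearEquiv [Module.Injective R A] (e : A ≃ₗ[R] B) :
    Module.Injective R B where
  out X Y _ _ _ _ f hf g := by
    obtain ⟨h, hh⟩ := Module.Injective.out (Q := A) f hf (e.symm.toLinearMap ∘ₗ g)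
    exact ⟨e.toLinearMap ∘ₗ h, fun x => by simp [hh x]⟩

theorem Module.Injective.of_isCompl [Module.Injective R A] {N P : Submodule R A}
    (h : IsCompl N P) : Module.Injective R N where
  out X Y _ _ _ _ f hf g := by
    obtain ⟨k, hk⟩ := Module.Injective.out (Q := A) f hf (N.subtype ∘ₗ g)
    exact ⟨N.projectionOnto P h ∘ₗ k, fun x => by simp [hk x]⟩

theorem Submodule.exists_isCompl_of_injective (N : Submodule R A) [Module.Injective R N] :
    ∃ P, IsCompl N P := by
  obtain ⟨r, hr⟩ := Module.Injective.out N.subtype N.injective_subtype LinearMap.id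
  exact ⟨LinearMap.ker r, LinearMap.isCompl_of_proj hr⟩

theorem Module.injective_of_forall_exists_le_mem_domain
    (h : ∀ (Y : Type v) [AddCommGroup Y] [Module R Y] (m : Y →ₗ.[R] A) (y : Y),
      ∃ m', m ≤ m' ∧ y ∈ m'.domain) :
    Module.Injective R A where
  out X Y _ _ _ _ f hf g := by
    let m₀ : Y →ₗ.[R] A :=
      ⟨LinearMap.range f, g ∘ₗ (LinearEquiv.ofInjective f hf).symm.toLinearMap⟩
    obtain ⟨m, hm₀, hmax⟩ := zorn_le_nonempty_Ici₀ m₀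
      (fun c _ hc _ _ => ⟨LinearPMap.sSup c hc.directedOn,
        fun _ hz => LinearPMap.le_sSup hc.directedOn hz⟩) m₀ le_rfl
    have htop : m.domain = ⊤ := Submodule.eq_top_iff'.2 fun y => by
      obtain ⟨m', hmm', hy⟩ := h Y m y
      exact (hmax hmm').1 hy
    refine ⟨m.toFun ∘ₗ (LinearEquiv.ofTop _ htop).symm.toLinearMap, fun x => ?_⟩
    have hx : f x ∈ m₀.domain := LinearMap.mem_range_self f x
    calc m ⟨f x, _⟩ = m₀ ⟨f x, hx⟩ := (hm₀.2 rfl).symm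
      _ = g x := congrArg g ((LinearEquiv.ofInjective f hf).symm_apply_eq.2 rfl)

theorem Module.Injective.exists_forall_mem_span_singleton [Module.Injective R A]
    {X Z : Type v} [AddCommGroup X] [Module R X] [AddCommGroup Z] [Module R Z] {y : X}
    (j : Z →ₗ[R] R ∙ y) (hj : Function.Injective j) (φ : Z →ₗ[R] A) :
    ∃ w : A, ∀ z, φ z ∈ R ∙ w := by
  obtain ⟨Φ, hΦ⟩ := Module.Injective.out j hj φ
  refine ⟨Φ ⟨y, Submodule.mem_span_singleton_self y⟩, fun z => ?_⟩
  obtain ⟨r, hr⟩ := Submodule.mem_span_singleton.1 (j z).2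
  rw [← hΦ z, show j z = r • ⟨y, Submodule.mem_span_singleton_self y⟩ from Subtype.ext hr.symm,
    map_smul]
  exact Submodule.smul_mem _ r (Submodule.mem_span_singleton_self _)

end

theorem SigmaInjective.injective_directSum {M : Type v} [AddCommGroup M] [Module R M]
    (hM : SigmaInjective R M) (ι : Type) : Module.Injective R (⨁ _ : ι, M) :=
  haveI := hM (ULift ι)
  .of_linearEquiv (lequivCongrLeft R (M := fun _ => M) Equiv.ulift)

theorem DirectSum.exists_linearMap_apply_eq {ι : Type*} {M : ι → Type*}
    [∀ i, AddCommGroup (M i)] [∀ i, Module R (M i)] {X : Type*} [AddCommGroup X] [Module R X]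
    (f : X →ₗ[R] ∀ i, M i) (hf : ∀ x, ∃ s : Finset ι, ∀ i ∉ s, f x i = 0) :
    ∃ g : X →ₗ[R] ⨁ i, M i, ∀ x i, g x i = f x i := by
  classical
  have hrange : ∀ x, f x ∈ LinearMap.range (coeFnLinearMap R (M := M)) := fun x => by
    obtain ⟨s, hs⟩ := hf x
    refine ⟨DFinsupp.mk s fun i => f x i, funext fun i => ?_⟩
    by_cases hi : i ∈ s
    · simp [hi]
    · simp [hi, hs i hi]
  let e := LinearEquiv.ofInjective (coeFnLinearMap R (M := M)) DFunLike.coe_injective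
  refine ⟨e.symm.toLinearMap ∘ₗ f.codRestrict _ hrange, fun x i => ?_⟩
  exact congrFun (congrArg Subtype.val (e.apply_symm_apply ⟨f x, hrange x⟩)) i

section Stabilization

variable {Q : Type v} [AddCommGroup Q] [Module R Q] {T P : ℕ → Submodule R Q}

noncomputable def projDiff (hP : ∀ n, IsCompl (T n) (P n)) : Q →ₗ[R] ℕ → Q :=
  LinearMap.pi fun n =>
    (T (n + 1)).projection (P (n + 1)) (hP (n + 1)) - (T n).projection (P n) (hP n)

theorem projDiff_apply_eq_zero (hT : Monotone T) (hP : ∀ n, IsCompl (T n) (P n)) {q : Q}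
    {m n : ℕ} (hq : q ∈ T m) (hmn : m ≤ n) : projDiff hP q n = 0 := by
  simp [projDiff, Submodule.projection_apply_of_mem_left (hP n) (hT hmn hq),
    Submodule.projection_apply_of_mem_left (hP (n + 1)) (hT (hmn.trans n.le_succ) hq)]

theorem mem_of_forall_projDiff_eq_zero (hT : Monotone T) (hP : ∀ n, IsCompl (T n) (P n))
    {q : Q} {m n₀ : ℕ} (hq : q ∈ T m) (h : ∀ n ≥ n₀, projDiff hP q n = 0) : q ∈ T n₀ := by
  have hconst : ∀ n ≥ n₀, (T n).projection (P n) (hP n) q = (T n₀).projection (P n₀) (hP n₀) q :=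
    Nat.le_induction rfl fun n hn ih => by
      rw [← ih]
      exact sub_eq_zero.1 (h n hn)
  rw [← Submodule.projection_apply_of_mem_left (hP (max m n₀)) (hT (le_max_left m n₀) hq),
    hconst _ (le_max_right m n₀)]
  exact Submodule.projection_apply_mem _ _

theorem Monotone.exists_forall_mem_of_exists_mem [Module.Injective R (⨁ _ : ℕ, Q)]
    (hT : Monotone T) (hTc : ∀ n, ∃ P, IsCompl (T n) P)
    {X : Type v} [AddCommGroup X] [Module R X] {y : X} {D : Submodule R X} (hD : D ≤ R ∙ y)
    (g : D →ₗ[R] Q) : ∃ n₀, ∀ x, (∃ n, g x ∈ T n) → g x ∈ T n₀ := by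
  classical
  choose P hP using hTc
  have hU : ∀ {q}, q ∈ ⨆ n, T n ↔ ∃ n, q ∈ T n := Submodule.mem_iSup_of_directed T hT.directed_le
  let D' := (⨆ n, T n).comap g
  obtain ⟨φ, hφ⟩ := DirectSum.exists_linearMap_apply_eq (projDiff hP ∘ₗ g ∘ₗ D'.subtype)
    fun x => by
      obtain ⟨m, hm⟩ := hU.1 x.2
      exact ⟨Finset.range m, fun n hn =>
        projDiff_apply_eq_zero hT hP hm (not_lt.1 (Finset.mem_range.not.1 hn))⟩
  obtain ⟨w, hw⟩ := Module.Injective.exists_forall_mem_span_singleton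
    (Submodule.inclusion hD ∘ₗ D'.subtype)
    ((Submodule.inclusion_injective hD).comp D'.injective_subtype) φ
  obtain ⟨n₀, hn₀⟩ := Finset.exists_nat_subset_range (DFinsupp.support w)
  refine ⟨n₀, fun x ⟨m, hm⟩ => mem_of_forall_projDiff_eq_zero hT hP hm fun n hn => ?_⟩
  let x' : D' := ⟨x, hU.2 ⟨m, hm⟩⟩
  obtain ⟨r, hr⟩ := Submodule.mem_span_singleton.1 (hw x')
  have hwn : w n = 0 := DFinsupp.notMem_support_iff.1 fun h => by
    have := Finset.mem_range.1 (hn₀ h)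
    omega
  rw [show projDiff hP (g x) n = φ x' n from (hφ x' n).symm, ← hr, DirectSum.smul_apply, hwn,
    smul_zero]

end Stabilization

section Chain

variable {Q : Type v} [AddCommGroup Q] [Module R Q] {C : Set (Submodule R Q)}

theorem IsChain.exists_forall_mem_of_forall_mem_sSup [Module.Injective R (⨁ _ : ℕ, Q)]
    (hC : IsChain (· ≤ ·) C) (hne : C.Nonempty) (hCc : ∀ N ∈ C, ∃ P, IsCompl N P)
    {X : Type v} [AddCommGroup X] [Module R X] {y : X} {D : Submodule R X} (hD : D ≤ R ∙ y)
    (g : D →ₗ[R] Q) (hg : ∀ x, g x ∈ sSup C) : ∃ N ∈ C, ∀ x, g x ∈ N := by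
  by_contra! hcon
  have hstep : ∀ N : C, ∃ N' : C, N ≤ N' ∧ ∃ x, g x ∈ N'.1 ∧ g x ∉ N.1 := by
    rintro ⟨N, hN⟩
    obtain ⟨x, hx⟩ := hcon N hN
    obtain ⟨N', hN', hxN'⟩ := (Submodule.mem_sSup_of_directed hne hC.directedOn).1 (hg x)
    exact ⟨⟨N', hN'⟩, (hC.total hN hN').resolve_right fun h => hx (h hxN'), x, hxN', hx⟩
  choose next hle x hx using hstep
  obtain ⟨N₀, hN₀⟩ := hne
  let T : ℕ → Submodule R Q := fun n => (next^[n] ⟨N₀, hN₀⟩).1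
  have hTsucc : ∀ n, T (n + 1) = (next (next^[n] ⟨N₀, hN₀⟩)).1 := fun n =>
    congrArg Subtype.val (Function.iterate_succ_apply' next n _)
  have hT : Monotone T := monotone_nat_of_le_succ fun n => hTsucc n ▸ hle _
  obtain ⟨n₀, hn₀⟩ := hT.exists_forall_mem_of_exists_mem (fun n => hCc _ (next^[n] _).2) hD g
  obtain ⟨hxnext, hxT⟩ := hx (next^[n₀] ⟨N₀, hN₀⟩)
  exact hxT (hn₀ _ ⟨n₀ + 1, hTsucc n₀ ▸ hxnext⟩)

theorem IsChain.injective_sSup [Module.Injective R Q] [Module.Injective R (⨁ _ : ℕ, Q)]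
    (hC : IsChain (· ≤ ·) C) (hne : C.Nonempty) (hCc : ∀ N ∈ C, ∃ P, IsCompl N P) :
    Module.Injective R ↥(sSup C) := by
  refine Module.injective_of_forall_exists_le_mem_domain fun Y _ _ m y => ?_
  let D := m.domain ⊓ (R ∙ y)
  let g : D →ₗ[R] Q := (sSup C).subtype ∘ₗ m.toFun ∘ₗ Submodule.inclusion inf_le_left
  obtain ⟨N, hN, hgN⟩ :=
    hC.exists_forall_mem_of_forall_mem_sSup hne hCc inf_le_right g fun x => (m _).2
  obtain ⟨P, hP⟩ := hCc N hN
  have := Module.Injective.of_isCompl hP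
  obtain ⟨e, he⟩ := Module.Injective.out (Submodule.inclusion (inf_le_right : D ≤ R ∙ y))
    (Submodule.inclusion_injective _) (g.codRestrict N hgN)
  let m' : Y →ₗ.[R] ↥(sSup C) := ⟨R ∙ y, Submodule.inclusion (le_sSup hN) ∘ₗ e⟩
  have H : ∀ (x : m.domain) (z : m'.domain), (x : Y) = z → m x = m' z := by
    rintro x ⟨_, hx⟩ rfl
    exact Subtype.ext (congrArg Subtype.val (he ⟨x, x.2, hx⟩)).symm
  exact ⟨m.sup m' H, m.left_le_sup m' H,
    Submodule.mem_sup_right (Submodule.mem_span_singleton_self y)⟩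

end Chain

end

theorem iSup_chain_summand_isCompl (R : Type u) [Ring R] (M : Type v) [AddCommGroup M]
    [Module R M] (hM : SigmaInjective R M)
    (C : Set (Submodule R (⨁ _ : ℕ, M))) (hC : IsChain (· ≤ ·) C)
    (hsummand : ∀ N ∈ C, ∃ P, IsCompl N P) :
    ∃ P, IsCompl (sSup C) P := by
  have := hM.injective_directSum ℕ
  have : Module.Injective R (⨁ _ : ℕ, ⨁ _ : ℕ, M) :=
    have := hM.injective_directSum (Σ _ : ℕ, ℕ)
    .of_linearEquiv (A := ⨁ _ : (Σ _ : ℕ, ℕ), M)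
      (sigmaLcurryEquiv (R := R) (δ := fun _ _ => M))
  rcases C.eq_empty_or_nonempty with rfl | hne
  · exact ⟨⊤, by simpa using isCompl_bot_top⟩
  have := hC.injective_sSup hne hsummand
  exact (sSup C).exists_isCompl_of_injective
end

section
/- Let M be a Σ-injective left R-module. Then every finitely injective submodule of M^(ℵ₀) is a direct summand of M^(ℵ₀), and in particular injective. -/
/-! A finitely injective submodule `N` of the injective module `Q = M^(ℕ)` is a retract of `Q`
as soon as every "equation" `c • x = c • w` (for all `c` with `c • w ∈ N`) has a solution
`x ∈ N`: a maximal partial retraction can then always be extended by one more element. Finite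
subsystems are solvable because `N` is finitely injective, and the whole system is solvable
because `Q^(ℕ)` is injective: otherwise one builds `z n ∈ Q` and `a n ∈ R` with
`a k • z n = 0` for `k < n` but `a n • z n ≠ 0`, and the sequence `(z n)` cannot be matched on
`R`-multiples by a finitely supported one, as injectivity of `Q^(ℕ)` demands. -/

open DirectSum

universe w

section

variable {R : Type*} [Ring R]

theorem Module.Injective.of_retraction {Q N : Type w}
    [AddCommGroup Q] [Module R Q] [AddCommGroup N] [Module R N] [Module.Injective R Q]
    (i : N →ₗ[R] Q) (ρ : Q →ₗ[R] N) (hρ : ∀ x, ρ (i x) = x) : Module.Injective R N where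
  out X Y _ _ _ _ f hf g := by
    obtain ⟨h, hh⟩ := Module.Injective.out f hf (i ∘ₗ g)
    exact ⟨ρ ∘ₗ h, fun x => by simp [hh, hρ]⟩

theorem Module.Injective.of_linearEquiv_s8 {Q N : Type w}
    [AddCommGroup Q] [Module R Q] [AddCommGroup N] [Module R N] [Module.Injective R Q]
    (e : Q ≃ₗ[R] N) : Module.Injective R N :=
  .of_retraction e.symm.toLinearMap e.toLinearMap e.apply_symm_apply

theorem Module.Injective.exists_forall_smul_eq {E P : Type w}
    [AddCommGroup E] [Module R E] [AddCommGroup P] [Module R P] [Module.Injective R E]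
    {f : E →ₗ[R] P} (hf : Function.Injective f) (x : P) :
    ∃ e : E, ∀ c : R, c • x ∈ LinearMap.range f → c • f e = c • x := by
  obtain ⟨ρ, hρ⟩ := Module.Injective.out f hf LinearMap.id
  refine ⟨ρ x, fun c ⟨y, hy⟩ => ?_⟩
  rw [← map_smul, ← map_smul, ← hy, hρ, LinearMap.id_apply]

theorem LinearPMap.exists_le_mem_domain {E F : Type*} [AddCommGroup E] [Module R E]
    [AddCommGroup F] [Module R F] (p : E →ₗ.[R] F) (x : E) (y : F)
    (h : ∀ (c : R) (hc : c • x ∈ p.domain), p ⟨c • x, hc⟩ = c • y) :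
    ∃ p' : E →ₗ.[R] F, p ≤ p' ∧ x ∈ p'.domain := by
  have hy : ∀ c : R, c • x = 0 → c • y = 0 := fun c hc => by
    rw [← h c (hc ▸ p.domain.zero_mem)]
    exact (congrArg p (Subtype.ext hc)).trans p.map_zero
  let g := LinearPMap.mkSpanSingleton' (σ := RingHom.id R) x y hy
  have compat : ∀ (u : p.domain) (v : g.domain), (u : E) = v → p u = g v := by
    rintro u ⟨v, hv⟩ (huv : (u : E) = v)
    obtain ⟨c, rfl⟩ := Submodule.mem_span_singleton.1 hv
    rw [LinearPMap.mkSpanSingleton'_apply, RingHom.id_apply, ← h c (huv ▸ u.2)]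
    exact congrArg p (Subtype.ext huv)
  exact ⟨p.sup g compat, p.left_le_sup g compat,
    Submodule.mem_sup_right (Submodule.mem_span_singleton_self x)⟩

theorem Submodule.exists_retraction_of_forall_exists_smul_eq {Q : Type*}
    [AddCommGroup Q] [Module R Q] [Module.Injective R Q] (N : Submodule R Q)
    (hN : ∀ w : Q, ∃ n ∈ N, ∀ c : R, c • w ∈ N → c • n = c • w) :
    ∃ ρ : Q →ₗ[R] N, ∀ x : N, ρ x = x := by
  let p₀ : Q →ₗ.[R] N := ⟨N, LinearMap.id⟩
  obtain ⟨p, hp₀, hmax⟩ := zorn_le_nonempty_Ici₀ p₀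
    (fun c _ hc _ _ => ⟨LinearPMap.sSup c hc.directedOn, fun _ => LinearPMap.le_sSup _⟩) p₀ le_rfl
  have hdom : ∀ q, q ∈ p.domain := by
    intro q
    obtain ⟨f, hf⟩ :=
      Module.Injective.out p.domain.subtype Subtype.val_injective (N.subtype ∘ₗ p.toFun)
    -- `f q` solves in `Q` the system that a value of an extension of `p` at `q` must solve in `N`
    obtain ⟨n, hnN, hn⟩ := hN (f q)
    suffices ∀ (c : R) (hc : c • q ∈ p.domain), p ⟨c • q, hc⟩ = c • ⟨n, hnN⟩ by
      obtain ⟨p', hpp', hq⟩ := p.exists_le_mem_domain q ⟨n, hnN⟩ this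
      exact (hmax hpp').1 hq
    intro c hc
    have hcq : c • f q = p ⟨c • q, hc⟩ := by rw [← map_smul]; exact hf ⟨c • q, hc⟩
    ext
    rw [Submodule.coe_smul, hn c (hcq ▸ (p _).2), hcq]
  refine ⟨p.toFun ∘ₗ LinearMap.id.codRestrict p.domain hdom, fun x => ?_⟩
  exact (hp₀.2 (x := ⟨x, x.2⟩) rfl).symm

theorem exists_smul_eq_zero_of_injective_directSum {Q : Type*} [AddCommGroup Q]
    [Module R Q] [Module.Injective R (⨁ _ : ℕ, Q)] (z : ℕ → Q) (a : ℕ → R)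
    (h : ∀ k n, k < n → a k • z n = 0) : ∃ m, a m • z m = 0 := by
  classical
  obtain ⟨d, hd⟩ := Module.Injective.exists_forall_smul_eq (E := ⨁ _ : ℕ, Q)
    (f := DFinsupp.coeFnLinearMap R) DFunLike.coe_injective z
  obtain ⟨m, hm⟩ := Infinite.exists_notMem_finset d.support
  refine ⟨m, ?_⟩
  have hmem : a m • z ∈ LinearMap.range (DFinsupp.coeFnLinearMap R) := by
    refine ⟨DFinsupp.mk (Finset.range (m + 1)) fun n => a m • z n, funext fun n => ?_⟩
    by_cases hn : n < m + 1
    · simp [DFinsupp.mk_apply, hn]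
    · simp [DFinsupp.mk_apply, hn, h m n (by omega)]
  have hdm : a m • d m = a m • z m := congrFun (hd (a m) hmem) m
  rwa [DFinsupp.notMem_support_iff.mp hm, smul_zero, eq_comm] at hdm

theorem exists_forall_smul_eq_zero_of_injective_directSum {Q : Type*}
    [AddCommGroup Q] [Module R Q] [Module.Injective R (⨁ _ : ℕ, Q)] (S : Set R) (X : Set Q)
    (hX : ∀ F : Finset R, ↑F ⊆ S → ∃ x ∈ X, ∀ a ∈ F, a • x = 0) :
    ∃ x ∈ X, ∀ a ∈ S, a • x = 0 := by
  classical
  by_contra! hS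
  choose! x hxX hx using hX
  choose! b hbS hb using hS
  -- `T n` collects the coefficients `b` chosen so far; `x (T n)` is killed by all of them.
  let T : ℕ → Finset R := fun n =>
    Nat.rec (motive := fun _ => Finset R) ∅ (fun _ F => insert (b (x F)) F) n
  have hT_succ : ∀ n, T (n + 1) = insert (b (x (T n))) (T n) := fun n => rfl
  have hTS : ∀ n, (T n : Set R) ⊆ S := by
    intro n
    induction n with
    | zero => simp [T]
    | succ n ih =>
      rw [hT_succ, Finset.coe_insert]
      exact Set.insert_subset (hbS _ (hxX _ ih)) ih
  have hT_mono : Monotone T :=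
    monotone_nat_of_le_succ fun n => (hT_succ n).symm ▸ Finset.subset_insert _ _
  obtain ⟨m, hm⟩ := exists_smul_eq_zero_of_injective_directSum (fun n => x (T n))
    (fun n => b (x (T n))) fun k n hkn =>
      hx _ (hTS n) _ (hT_mono (Nat.succ_le_of_lt hkn) (hT_succ k ▸ Finset.mem_insert_self _ _))
  exact hb _ (hxX _ (hTS m)) hm

theorem FinitelyInjective.exists_forall_smul_eq {Q : Type*} [AddCommGroup Q]
    [Module R Q] {N : Submodule R Q} (hN : FinitelyInjective R N) (w : Q) (F : Finset R)
    (hF : ∀ a ∈ F, a • w ∈ N) : ∃ n ∈ N, ∀ a ∈ F, a • n = a • w := by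
  classical
  obtain ⟨E, hE, hFE⟩ := hN ((F.image (· • w)).subtype (· ∈ N))
  obtain ⟨e, he⟩ := Module.Injective.exists_forall_smul_eq (f := N.subtype ∘ₗ E.subtype)
    (Subtype.val_injective.comp Subtype.val_injective) w
  refine ⟨(e : N), (e : N).2, fun a ha => he a ⟨⟨⟨a • w, hF a ha⟩, hFE _ ?_⟩, rfl⟩⟩
  simpa using ⟨a, ha, rfl⟩

theorem FinitelyInjective.exists_forall_smul_eq_of_injective_directSum {Q : Type*}
    [AddCommGroup Q] [Module R Q] [Module.Injective R (⨁ _ : ℕ, Q)] {N : Submodule R Q}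
    (hN : FinitelyInjective R N) (w : Q) : ∃ n ∈ N, ∀ c : R, c • w ∈ N → c • n = c • w := by
  have hfin : ∀ F : Finset R, (F : Set R) ⊆ {c | c • w ∈ N} →
      ∃ x ∈ (w - ·) '' N, ∀ a ∈ F, a • x = 0 := by
    intro F hF
    obtain ⟨n, hn, hFn⟩ := hN.exists_forall_smul_eq w F hF
    exact ⟨w - n, ⟨n, hn, rfl⟩, fun a ha => by rw [smul_sub, hFn a ha, sub_self]⟩
  obtain ⟨_, ⟨n, hn, rfl⟩, hS⟩ := exists_forall_smul_eq_zero_of_injective_directSum _ _ hfin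
  exact ⟨n, hn, fun c hc => (sub_eq_zero.mp (by rw [← smul_sub]; exact hS c hc)).symm⟩

end

theorem finitelyInjective_submodule_isCompl_of_sigmaInjective (R : Type u) [Ring R] (M : Type v)
    [AddCommGroup M] [Module R M] (hM : SigmaInjective R M)
    (N : Submodule R (⨁ _ : ℕ, M)) (hN : FinitelyInjective R N) :
    (∃ P, IsCompl N P) ∧ Module.Injective R N := by
  have : Module.Injective R (⨁ _ : ℕ, M) :=
    (hM (ULift ℕ)).of_linearEquiv_s8 (lequivCongrLeft R Equiv.ulift)
  have : Module.Injective R (⨁ _ : ℕ, ⨁ _ : ℕ, M) := (hM (ULift (Σ _ : ℕ, ℕ))).of_linearEquiv_s8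
    ((lequivCongrLeft R Equiv.ulift).trans (sigmaLcurryEquiv R (δ := fun _ _ => M)))
  obtain ⟨ρ, hρ⟩ := N.exists_retraction_of_forall_exists_smul_eq
    hN.exists_forall_smul_eq_of_injective_directSum
  exact ⟨⟨_, LinearMap.isCompl_of_proj hρ⟩, .of_retraction N.subtype ρ hρ⟩
end

section
/- Let M be an injective left R-module which is not Σ-injective. Then there exists a finitely injective submodule of E(M^(ℵ₀)) which is not a direct sum of injective modules. -/
open DirectSum

/-- A module is a direct sum of injective modules if it is the internal direct sum of a
family of injective submodules. -/
def IsDirectSumOfInjectives (R : Type u) [Ring R] (M : Type v) [AddCommGroup M]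
    [Module R M] : Prop :=
  ∃ (ι : Type v) (_ : DecidableEq ι) (p : ι → Submodule R M),
    (∀ i, Module.Injective R (p i)) ∧ DirectSum.IsInternal p

/-!
Suppose every finitely injective submodule of `E` were a direct sum of injectives. The image `A`
of `M^(ℕ)` is finitely injective, and `A ≠ E`, since otherwise `M^(ℕ)` would be injective and `M`
would be `Σ`-injective. Pick `x₀ ∉ A` and, by Zorn, a submodule `N ⊇ A` maximal among the
finitely injective ones avoiding `x₀`. It is not injective: it would split off `E` and contain the
essential `A`, so it would be all of `E`. Hence `N = ⨁ pᵢ` with the failure of injectivity, tested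
on cyclic modules, spread over infinitely many summands; halving these gives `N = B₁ ⊕ B₂` with
both halves finitely injective and not injective. Injective `H₁ ⊇ B₁` and `H₂ ⊇ B₂` in `E` with
`H₁ ∩ B₂ = H₁ ∩ H₂ = 0` give proper finitely injective enlargements `B₂ ⊕ H₁` and `B₁ ⊕ H₂` of
`N`, so both contain `x₀`, yet they intersect in `N`.
-/

universe u v

namespace Module.Injective

variable {R : Type u} [Ring R] {P Q : Type v} [AddCommGroup P] [Module R P] [AddCommGroup Q]
  [Module R Q]

theorem of_subsingleton [Subsingleton P] : Module.Injective R P where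
  out _ _ _ _ _ _ _ _ _ := ⟨0, fun _ => Subsingleton.elim _ _⟩

theorem of_leftInverse (hQ : Module.Injective R Q) (s : P →ₗ[R] Q) (r : Q →ₗ[R] P)
    (hrs : ∀ x, r (s x) = x) : Module.Injective R P where
  out _ _ _ _ _ _ f hf g := by
    obtain ⟨h, hh⟩ := hQ.out f hf (s ∘ₗ g)
    exact ⟨r ∘ₗ h, fun x => by simp [hh, hrs]⟩

theorem of_linearEquiv_s10 (hQ : Module.Injective R Q) (e : Q ≃ₗ[R] P) : Module.Injective R P :=
  hQ.of_leftInverse e.symm.toLinearMap e.toLinearMap e.apply_symm_apply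

theorem prod (hP : Module.Injective R P) (hQ : Module.Injective R Q) :
    Module.Injective R (P × Q) where
  out _ _ _ _ _ _ f hf g := by
    obtain ⟨h₁, hh₁⟩ := hP.out f hf (LinearMap.fst R P Q ∘ₗ g)
    obtain ⟨h₂, hh₂⟩ := hQ.out f hf (LinearMap.snd R P Q ∘ₗ g)
    exact ⟨h₁.prod h₂, fun x => Prod.ext (hh₁ x) (hh₂ x)⟩

end Module.Injective

namespace Module

/-- Baer's criterion with the ideals of `R` replaced by submodules of cyclic modules in the
universe of `Q`. `Module.Baer` cannot be used: `Module.Injective R Q` only tests modules in that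
universe, and `R` need not be small there. -/
def CyclicBaer (R : Type u) [Ring R] (Q : Type v) [AddCommGroup Q] [Module R Q] : Prop :=
  ∀ (Y : Type v) [AddCommGroup Y] [Module R Y] (y : Y) (W : Submodule R Y) (hW : W ≤ R ∙ y)
    (η : W →ₗ[R] Q), ∃ β : (R ∙ y) →ₗ[R] Q, ∀ w, β (Submodule.inclusion hW w) = η w

variable {R : Type u} [Ring R] {Q : Type v} [AddCommGroup Q] [Module R Q]

theorem CyclicBaer.injective (h : CyclicBaer R Q) : Module.Injective R Q where
  out X Y _ _ _ _ f hf g := by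
    let φ₀ : Y →ₗ.[R] Q :=
      ⟨LinearMap.range f, g ∘ₗ (LinearEquiv.ofInjective f hf).symm.toLinearMap⟩
    obtain ⟨φ, hφ₀, hφ⟩ := zorn_le_nonempty₀ {φ | φ₀ ≤ φ} (fun c hc hchain ψ hψ =>
      ⟨LinearPMap.sSup c hchain.directedOn, (hc hψ).trans (LinearPMap.le_sSup _ hψ),
        fun _ => LinearPMap.le_sSup _⟩) φ₀ (le_refl φ₀)
    have htop : φ.domain = ⊤ := by
      refine Submodule.eq_top_iff'.mpr fun y => ?_
      obtain ⟨β, hβ⟩ := h Y y (φ.domain ⊓ R ∙ y) inf_le_right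
        (φ.toFun ∘ₗ Submodule.inclusion inf_le_left)
      have hcompat : ∀ (x : φ.domain) (z : R ∙ y), (x : Y) = z → φ x = β z := by
        rintro x ⟨z, hz⟩ rfl
        exact (hβ ⟨x, x.2, hz⟩).symm
      have hle := hφ.le_of_ge (hφ.prop.trans (φ.left_le_sup ⟨R ∙ y, β⟩ hcompat))
        (φ.left_le_sup ⟨R ∙ y, β⟩ hcompat)
      exact hle.1 (Submodule.mem_sup_right (Submodule.mem_span_singleton_self y))
    refine ⟨φ.toFun ∘ₗ (LinearEquiv.ofTop _ htop).symm.toLinearMap, fun x => ?_⟩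
    have hφx :=
      hφ₀.2 (x := ⟨f x, LinearMap.mem_range_self f x⟩) (y := ⟨f x, htop ▸ trivial⟩) rfl
    have hx : (LinearEquiv.ofInjective f hf).symm ⟨f x, LinearMap.mem_range_self f x⟩ = x :=
      (LinearEquiv.ofInjective f hf).symm_apply_eq.mpr rfl
    calc φ ((LinearEquiv.ofTop _ htop).symm (f x)) = φ₀ ⟨f x, _⟩ := hφx.symm
      _ = g x := congrArg g hx

end Module

namespace Submodule

variable {R : Type u} [Ring R] {E : Type v} [AddCommGroup E] [Module R E]

noncomputable def prodEquivSupOfDisjoint {U V : Submodule R E} (h : Disjoint U V) :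
    (U × V) ≃ₗ[R] ↥(U ⊔ V) :=
  have hinj : Function.Injective (U.subtype.coprod V.subtype) := by
    rw [← LinearMap.ker_eq_bot, LinearMap.ker_coprod_of_disjoint_range _ _ (by simpa using h)]
    simp
  (LinearEquiv.ofInjective _ hinj).trans
    (LinearEquiv.ofEq _ _ (by rw [LinearMap.range_coprod, range_subtype, range_subtype]))

theorem injective_sup {U V : Submodule R E} (h : Disjoint U V) (hU : Module.Injective R U)
    (hV : Module.Injective R V) : Module.Injective R ↥(U ⊔ V) :=
  (hU.prod hV).of_linearEquiv_s10 (prodEquivSupOfDisjoint h)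

theorem injective_left_of_injective_sup {U V : Submodule R E} (h : Disjoint U V)
    (hUV : Module.Injective R ↥(U ⊔ V)) : Module.Injective R U :=
  hUV.of_leftInverse ((prodEquivSupOfDisjoint h).toLinearMap ∘ₗ LinearMap.inl R U V)
    (LinearMap.fst R U V ∘ₗ (prodEquivSupOfDisjoint h).symm.toLinearMap) (by simp)

end Submodule

namespace iSupIndep

variable {R : Type u} [Ring R] {E : Type v} [AddCommGroup E] [Module R E] {ι : Type*}
  {p : ι → Submodule R E}

theorem injective_biSup_of_finite (hp : iSupIndep p) (hinj : ∀ i, Module.Injective R (p i))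
    {D : Set ι} (hD : D.Finite) : Module.Injective R ↥(⨆ i ∈ D, p i) := by
  induction D, hD using Set.Finite.induction_on with
  | empty =>
    rw [iSup_emptyset]
    exact Module.Injective.of_subsingleton
  | @insert a D ha _ ih =>
    rw [iSup_insert]
    exact Submodule.injective_sup (hp.disjoint_biSup ha) (hinj a) ih

theorem injective_biSup_of_subset (hp : iSupIndep p) {C D : Set ι} (hCD : C ⊆ D)
    (hD : Module.Injective R ↥(⨆ i ∈ D, p i)) : Module.Injective R ↥(⨆ i ∈ C, p i) := by
  rw [← Set.union_sdiff_cancel hCD, iSup_union] at hD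
  exact Submodule.injective_left_of_injective_sup
    (hp.disjoint_biSup_biSup Set.disjoint_sdiff_right) hD

end iSupIndep

namespace Submodule

variable {R : Type u} [Ring R] {E : Type v} [AddCommGroup E] [Module R E]

/-- `FinitelyInjective R N`, phrased for a submodule of the ambient module `E`. -/
def IsFinitelyInjective (N : Submodule R E) : Prop :=
  ∀ s : Set E, s.Finite → s ⊆ N → ∃ L ≤ N, Module.Injective R L ∧ s ⊆ L

namespace IsFinitelyInjective

variable {N : Submodule R E}

theorem finitelyInjective (hN : N.IsFinitelyInjective) : FinitelyInjective R N := by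
  intro s
  obtain ⟨L, hLN, hL, hsL⟩ := hN (Subtype.val '' s) (s.finite_toSet.image _)
    (by rintro _ ⟨x, -, rfl⟩; exact x.2)
  exact ⟨L.comap N.subtype, hL.of_linearEquiv_s10 (comapSubtypeEquivOfLe hLN).symm,
    fun x hx => hsL ⟨x, hx, rfl⟩⟩

theorem map {F : Type v} [AddCommGroup F] [Module R F] (hN : N.IsFinitelyInjective)
    (f : E →ₗ[R] F) (hf : Function.Injective f) : (N.map f).IsFinitelyInjective := by
  intro s hs hsN
  have hpre : f ⁻¹' s ⊆ N := fun x hx => by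
    obtain ⟨n, hn, hnx⟩ := hsN hx
    exact hf hnx ▸ hn
  obtain ⟨L, hLN, hL, hsL⟩ := hN _ (hs.preimage hf.injOn) hpre
  refine ⟨L.map f, map_mono hLN, hL.of_linearEquiv_s10 (equivMapOfInjective f hf L), fun y hy => ?_⟩
  obtain ⟨x, -, rfl⟩ := hsN hy
  exact mem_map_of_mem (hsL hy)

theorem sup (hN : N.IsFinitelyInjective) {H : Submodule R E} (hH : Module.Injective R H)
    (hNH : Disjoint N H) : (N ⊔ H).IsFinitelyInjective := by
  intro s hs hsNH
  choose! a ha b hb hab using fun x (hx : x ∈ s) => mem_sup.mp (hsNH hx)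
  obtain ⟨L, hLN, hL, haL⟩ :=
    hN (a '' s) (hs.image a) (by rintro _ ⟨x, hx, rfl⟩; exact ha x hx)
  refine ⟨L ⊔ H, sup_le_sup_right hLN H, injective_sup (hNH.mono_left hLN) hL hH,
    fun x hx => ?_⟩
  rw [← hab x hx]
  exact add_mem_sup (haL ⟨x, hx, rfl⟩) (hb x hx)

end IsFinitelyInjective

theorem exists_mem_subset_of_finite_subset_sSup {c : Set (Submodule R E)} (hne : c.Nonempty)
    (hc : DirectedOn (· ≤ ·) c) {s : Set E} (hs : s.Finite)
    (hsc : s ⊆ (sSup c : Submodule R E)) :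
    ∃ N ∈ c, s ⊆ N := by
  have hcoe : ((sSup c : Submodule R E) : Set E) = ⋃ N ∈ c, (N : Set E) := by
    ext x
    simp [mem_sSup_of_directed hne hc]
  rw [← hs.coe_toFinset] at hsc ⊢
  exact hc.exists_mem_subset_of_finset_subset_biUnion hne (hcoe ▸ hsc)

end Submodule

theorem iSupIndep.isFinitelyInjective_iSup {R : Type u} [Ring R] {E : Type v} [AddCommGroup E]
    [Module R E] {ι : Type*} {p : ι → Submodule R E} (hp : iSupIndep p)
    (hinj : ∀ i, Module.Injective R (p i)) : (⨆ i, p i).IsFinitelyInjective := by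
  intro s hs hsp
  choose! t ht using fun x (hx : x ∈ s) => Submodule.mem_iSup_iff_exists_finset.mp (hsp hx)
  refine ⟨⨆ i ∈ ⋃ x ∈ s, (t x : Set ι), p i, iSup₂_le fun i _ => le_iSup p i,
    hp.injective_biSup_of_finite hinj (hs.biUnion fun x _ => (t x).finite_toSet),
    fun x hx => ?_⟩
  exact (biSup_mono (f := p) fun i hi => Set.mem_biUnion hx hi) (ht x hx)

namespace Submodule

variable {R : Type u} [Ring R] {E : Type v} [AddCommGroup E] [Module R E]

theorem exists_le_maximal_disjoint {X Y : Submodule R E} (h : Disjoint X Y) :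
    ∃ H, X ≤ H ∧ Maximal (Disjoint · Y) H := by
  refine zorn_le_nonempty₀ _ (fun c hc hchain Z hZ => ⟨sSup c, ?_, fun _ => le_sSup⟩) X h
  refine disjoint_def.mpr fun x hxc hxY => ?_
  obtain ⟨N, hN, hxN⟩ := exists_mem_subset_of_finite_subset_sSup ⟨Z, hZ⟩ hchain.directedOn
    (Set.finite_singleton x) (Set.singleton_subset_iff.mpr hxc)
  exact disjoint_def.mp (hc hN) x (hxN rfl) hxY

theorem eq_bot_of_disjoint_map_mkQ {H D : Submodule R E} (hD : Maximal (Disjoint · H) D)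
    {V : Submodule R (E ⧸ D)} (hV : Disjoint V (H.map D.mkQ)) : V = ⊥ := by
  have hVH : Disjoint (V.comap D.mkQ) H := disjoint_def.mpr fun x hxV hxH =>
    disjoint_def.mp hD.prop x ((Quotient.mk_eq_zero D).mp
      (disjoint_def.mp hV _ hxV (mem_map_of_mem hxH))) hxH
  have hDV : D ≤ V.comap D.mkQ := fun x hx => by
    simp [(Quotient.mk_eq_zero D).mpr hx]
  rw [← map_comap_eq_of_surjective D.mkQ_surjective V, hD.eq_of_ge hVH hDV, mkQ_map_self]

/-- Injectivity of `E` embeds `E ⧸ D` into `E` over `H`; maximality of `H` forces the image to be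
`H`, which splits `E` as `H ⊕ D`. -/
theorem isCompl_of_maximal_disjoint (hE : Module.Injective R E) {H Y D : Submodule R E}
    (hH : Maximal (Disjoint · Y) H) (hD : Maximal (Disjoint · H) D) : IsCompl H D := by
  have hσ : Function.Injective (D.mkQ ∘ₗ H.subtype) := by
    rw [← LinearMap.ker_eq_bot, LinearMap.ker_comp, ker_mkQ, eq_bot_iff]
    intro x hx
    exact (mem_bot R).mpr (Subtype.ext (disjoint_def.mp hD.prop _ hx x.2))
  obtain ⟨φ, hφ⟩ := hE.out _ hσ H.subtype
  have hφH : ∀ x ∈ H, φ (D.mkQ x) = x := fun x hx => hφ ⟨x, hx⟩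
  have hφinj : Function.Injective φ := by
    rw [← LinearMap.ker_eq_bot]
    refine eq_bot_of_disjoint_map_mkQ hD (disjoint_def.mpr ?_)
    rintro _ hz ⟨x, hx, rfl⟩
    rw [LinearMap.mem_ker, hφH x hx] at hz
    simp [hz]
  have hrange : LinearMap.range φ = H := by
    refine hH.eq_of_ge ?_ fun x hx => LinearMap.mem_range.mpr ⟨D.mkQ x, hφH x hx⟩
    have hbot := eq_bot_of_disjoint_map_mkQ hD (V := (Y.comap φ)) <| disjoint_def.mpr <| by
      rintro _ hz ⟨x, hx, rfl⟩
      rw [mem_comap, hφH x hx] at hz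
      simp [disjoint_def.mp hH.prop x hx hz]
    refine disjoint_def.mpr ?_
    rintro _ ⟨z, rfl⟩ hzY
    rw [show z = 0 from (mem_bot R).mp (hbot ▸ hzY), map_zero]
  refine ⟨hD.prop.symm, codisjoint_iff.mpr (eq_top_iff.mpr fun q _ => ?_)⟩
  have hq : φ (D.mkQ q) ∈ H := hrange ▸ LinearMap.mem_range_self φ _
  refine mem_sup.mpr ⟨_, hq, q - φ (D.mkQ q), ?_, add_sub_cancel _ _⟩
  rw [← Quotient.mk_eq_zero D, ← mkQ_apply, map_sub, sub_eq_zero]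
  exact (hφinj (hφH _ hq)).symm

theorem exists_injective_le_disjoint (hE : Module.Injective R E) {X Y : Submodule R E}
    (h : Disjoint X Y) : ∃ H, X ≤ H ∧ Disjoint H Y ∧ Module.Injective R H := by
  obtain ⟨H, hXH, hH⟩ := exists_le_maximal_disjoint h
  obtain ⟨D, -, hD⟩ := exists_le_maximal_disjoint (disjoint_bot_left (a := H))
  have hHD := isCompl_of_maximal_disjoint hE hH hD
  refine ⟨H, hXH, hH.prop, injective_left_of_injective_sup hHD.disjoint ?_⟩
  rw [hHD.sup_eq_top]
  exact hE.of_linearEquiv_s10 (LinearEquiv.ofTop ⊤ rfl).symm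

theorem eq_top_of_injective_of_le {A N : Submodule R E}
    (hA : ∀ P : Submodule R E, Disjoint P A → P = ⊥) (hAN : A ≤ N)
    (hN : Module.Injective R N) : N = ⊤ := by
  obtain ⟨π, hπ⟩ := hN.out N.subtype N.injective_subtype LinearMap.id
  have hker : LinearMap.ker π = ⊥ := hA _ <| disjoint_def.mpr fun x hx hxA => by
    simpa [LinearMap.mem_ker.mp hx] using (hπ ⟨x, hAN hxA⟩).symm
  refine eq_top_iff'.mpr fun x => ?_
  have : x - π x ∈ LinearMap.ker π := by
    rw [LinearMap.mem_ker, map_sub, show π (π x : E) = π x from hπ (π x), sub_self]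
  rw [hker, mem_bot, sub_eq_zero] at this
  exact this ▸ (π x).2

end Submodule

theorem Set.Infinite.exists_disjoint_infinite_subsets {α : Type*} {T : Set α} (hT : T.Infinite) :
    ∃ C D, C ⊆ T ∧ D ⊆ T ∧ Disjoint C D ∧ C.Infinite ∧ D.Infinite := by
  obtain ⟨C, D, hCD, hdisj, hcard⟩ := hT.exists_union_disjoint_cardinal_eq_of_infinite
  have hC : C.Infinite := fun hC => hT <| hCD ▸ hC.union <| by
    rwa [← Cardinal.lt_aleph0_iff_set_finite, ← hcard, Cardinal.lt_aleph0_iff_set_finite]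
  refine ⟨C, D, hCD ▸ Set.subset_union_left, hCD ▸ Set.subset_union_right, hdisj, hC, ?_⟩
  rwa [Set.Infinite, ← Cardinal.lt_aleph0_iff_set_finite, ← hcard,
    Cardinal.lt_aleph0_iff_set_finite]

namespace iSupIndep

variable {R : Type u} [Ring R] {P : Type v} [AddCommGroup P] [Module R P] {ι : Type*}
  {p : ι → Submodule R P}

noncomputable def filterProj [DecidableEq ι] (hp : iSupIndep p) (htop : ⨆ i, p i = ⊤)
    (C : Set ι) [DecidablePred (· ∈ C)] : P →ₗ[R] P :=
  (hp.linearEquiv htop).toLinearMap ∘ₗ DFinsupp.filterLinearMap R (fun i => p i) (· ∈ C) ∘ₗ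
    (hp.linearEquiv htop).symm.toLinearMap

section filterProj

variable [DecidableEq ι] (hp : iSupIndep p) (htop : ⨆ i, p i = ⊤) (C : Set ι)
  [DecidablePred (· ∈ C)]

theorem filterProj_mem (x : P) : hp.filterProj htop C x ∈ ⨆ i ∈ C, p i :=
  (Submodule.mem_biSup_iff_exists_dfinsupp _ _ _).mpr ⟨(hp.linearEquiv htop).symm x, rfl⟩

theorem linearEquiv_symm_filterProj (x : P) :
    (hp.linearEquiv htop).symm (hp.filterProj htop C x) =
      ((hp.linearEquiv htop).symm x).filter (· ∈ C) := by
  simp only [filterProj, LinearMap.coe_comp, Function.comp_apply, LinearEquiv.coe_coe,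
    LinearEquiv.symm_apply_apply, DFinsupp.filterLinearMap_apply]

theorem filterProj_eq_self {x : P} (hx : ∀ i, (hp.linearEquiv htop).symm x i ≠ 0 → i ∈ C) :
    hp.filterProj htop C x = x := by
  rw [← (hp.linearEquiv htop).symm.injective.eq_iff, linearEquiv_symm_filterProj]
  refine DFinsupp.ext fun i => ?_
  by_cases hi : i ∈ C
  · rw [DFinsupp.filter_apply_pos _ hi]
  · rw [DFinsupp.filter_apply_neg _ hi, eq_comm]
    exact not_imp_comm.mp (hx i) hi

end filterProj

/-- A cyclic extension problem unsolvable in `P` involves infinitely many summands `T`, and stays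
unsolvable on every infinite `C ⊆ T`: a solution would take a value of finite support at the
generator, so it would miss the summands of `C` outside that support. -/
theorem exists_infinite_forall_not_injective (hp : iSupIndep p) (htop : ⨆ i, p i = ⊤)
    (hinj : ∀ i, Module.Injective R (p i)) (hP : ¬ Module.Injective R P) :
    ∃ T : Set ι, T.Infinite ∧ ∀ C ⊆ T, C.Infinite → ¬ Module.Injective R ↥(⨆ i ∈ C, p i) := by
  classical
  have hP' : ¬ Module.CyclicBaer R P := fun h => hP h.injective
  simp only [Module.CyclicBaer, not_forall, not_exists] at hP'
  obtain ⟨Y, _, _, y, W, hW, η, hη⟩ := hP'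
  set e := hp.linearEquiv htop
  have hext : ∀ C : Set ι, Module.Injective R ↥(⨆ i ∈ C, p i) →
      ∃ β : (R ∙ y) →ₗ[R] P, ∀ w, β (Submodule.inclusion hW w) = hp.filterProj htop C (η w) := by
    intro C hC
    obtain ⟨β, hβ⟩ := hC.out _ (Submodule.inclusion_injective hW)
      ((hp.filterProj htop C ∘ₗ η).codRestrict _ fun w => hp.filterProj_mem htop C _)
    exact ⟨(⨆ i ∈ C, p i).subtype ∘ₗ β, fun w => congrArg Subtype.val (hβ w)⟩
  refine ⟨{i | ∃ w, e.symm (η w) i ≠ 0}, fun hfin => ?_, fun C hCT hCinf hC => ?_⟩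
  · obtain ⟨β, hβ⟩ := hext _ (hp.injective_biSup_of_finite hinj hfin)
    obtain ⟨w, hw⟩ := hη β
    exact hw ((hβ w).trans (hp.filterProj_eq_self htop _ fun i hi => ⟨w, hi⟩))
  · obtain ⟨β, hβ⟩ := hext C hC
    set c := e.symm (β ⟨y, Submodule.mem_span_singleton_self y⟩)
    obtain ⟨i, hiC, hic⟩ := (hCinf.sdiff c.support.finite_toSet).nonempty
    obtain ⟨w, hw⟩ := hCT hiC
    obtain ⟨r, hr⟩ := Submodule.mem_span_singleton.mp (hW w.2)
    have hwr : Submodule.inclusion hW w = r • ⟨y, Submodule.mem_span_singleton_self y⟩ :=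
      Subtype.ext hr.symm
    apply hw
    calc e.symm (η w) i = e.symm (hp.filterProj htop C (η w)) i := by
          rw [linearEquiv_symm_filterProj, DFinsupp.filter_apply_pos _ hiC]
      _ = r • c i := by rw [← hβ, hwr, map_smul, map_smul]; rfl
      _ = 0 := by rw [DFinsupp.notMem_support_iff.mp hic, smul_zero]

theorem exists_not_injective_biSup_and_compl (hp : iSupIndep p) (htop : ⨆ i, p i = ⊤)
    (hinj : ∀ i, Module.Injective R (p i)) (hP : ¬ Module.Injective R P) :
    ∃ C : Set ι, ¬ Module.Injective R ↥(⨆ i ∈ C, p i) ∧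
      ¬ Module.Injective R ↥(⨆ i ∈ Cᶜ, p i) := by
  obtain ⟨T, hT, hbad⟩ := hp.exists_infinite_forall_not_injective htop hinj hP
  obtain ⟨C, D, hCT, hDT, hCD, hC, hD⟩ := hT.exists_disjoint_infinite_subsets
  exact ⟨C, hbad C hCT hC, fun h =>
    hbad D hDT hD (hp.injective_biSup_of_subset hCD.symm.subset_compl_right h)⟩

end iSupIndep

section Finsupp

variable {R : Type u} [Ring R] {M : Type v} [AddCommGroup M] [Module R M]

theorem Finsupp.biSup_lsingle_range_eq_supported {ι : Type*} (C : Set ι) :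
    ⨆ i ∈ C, LinearMap.range (Finsupp.lsingle i : M →ₗ[R] ι →₀ M) = Finsupp.supported M R C := by
  refine le_antisymm (iSup₂_le fun i hi => ?_) fun f hf => ?_
  · rintro _ ⟨m, rfl⟩
    exact Finsupp.single_mem_supported R m hi
  · rw [← f.sum_single]
    exact Submodule.sum_mem _ fun i hi => Submodule.mem_iSup_of_mem i
      (Submodule.mem_iSup_of_mem ((Finsupp.mem_supported R f).mp hf hi) ⟨f i, rfl⟩)

theorem Finsupp.injective_range_lsingle (hM : Module.Injective R M) {ι : Type v} (i : ι) :
    Module.Injective R (LinearMap.range (Finsupp.lsingle i : M →ₗ[R] ι →₀ M)) :=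
  hM.of_linearEquiv_s10 (LinearEquiv.ofInjective _ (Finsupp.single_injective i))

/-- If `M^(ι)` were not injective, some countably infinite `C ⊆ ι` would have `M^(C)`, a copy of
`M^(ℕ)`, not injective. -/
theorem sigmaInjective_of_injective_directSum_nat (hM : Module.Injective R M)
    (hNat : Module.Injective R (⨁ _ : ℕ, M)) : SigmaInjective R M := by
  classical
  intro ι
  refine Module.Injective.of_linearEquiv_s10 ?_ (finsuppLequivDFinsupp R (M := M) (ι := ι))
  by_contra h
  obtain ⟨T, hT, hbad⟩ := (iSupIndep_range_lsingle ι R M).exists_infinite_forall_not_injective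
    Finsupp.iSup_lsingle_range (Finsupp.injective_range_lsingle hM) h
  let f := Set.Infinite.natEmbedding T hT
  have hf : Function.Injective fun n => (f n : ι) := Subtype.val_injective.comp f.injective
  refine hbad _ (Set.range_subset_iff.mpr fun n => (f n).2) (Set.infinite_range_of_injective hf) ?_
  rw [Finsupp.biSup_lsingle_range_eq_supported]
  exact hNat.of_linearEquiv_s10 <| (finsuppLequivDFinsupp R).symm.trans <|
    (Finsupp.domLCongr (Equiv.ofInjective _ hf)).trans (Finsupp.supportedEquivFinsupp _).symm

theorem Finsupp.isFinitelyInjective_top (hM : Module.Injective R M) (ι : Type v) :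
    (⊤ : Submodule R (ι →₀ M)).IsFinitelyInjective := by
  have := (iSupIndep_range_lsingle ι R M).isFinitelyInjective_iSup
    (Finsupp.injective_range_lsingle hM)
  rwa [Finsupp.iSup_lsingle_range] at this

theorem isFinitelyInjective_range_of_directSum_nat {E : Type v} [AddCommGroup E] [Module R E]
    (hM : Module.Injective R M) {j : (⨁ _ : ℕ, M) →ₗ[R] E} (hj : Function.Injective j) :
    (LinearMap.range j).IsFinitelyInjective := by
  classical
  let e : (ULift ℕ →₀ M) ≃ₗ[R] ⨁ _ : ℕ, M :=
    (Finsupp.domLCongr Equiv.ulift).trans (finsuppLequivDFinsupp R)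
  have := (Finsupp.isFinitelyInjective_top hM (ULift ℕ)).map (j ∘ₗ e.toLinearMap)
    (hj.comp e.injective)
  rwa [Submodule.map_top, LinearMap.range_comp_of_range_eq_top _ e.range] at this

end Finsupp

theorem sup_inf_sup_eq_of_disjoint {α : Type*} [Lattice α] [OrderBot α] [IsModularLattice α]
    {b₁ b₂ h₁ h₂ : α} (hb₁ : b₁ ≤ h₁) (hb₂ : b₂ ≤ h₂) (hh : Disjoint h₁ h₂) :
    (b₂ ⊔ h₁) ⊓ (b₁ ⊔ h₂) = b₁ ⊔ b₂ := by
  rw [inf_comm, sup_inf_assoc_of_le _ (hb₁.trans le_sup_right), inf_comm,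
    sup_inf_assoc_of_le _ hb₂, hh.eq_bot, sup_bot_eq]

namespace Submodule

variable {R : Type u} [Ring R] {E : Type v} [AddCommGroup E] [Module R E]

theorem exists_maximal_isFinitelyInjective {A : Submodule R E} (hA : A.IsFinitelyInjective)
    {x₀ : E} (hx₀ : x₀ ∉ A) :
    ∃ N, Maximal (fun N : Submodule R E => A ≤ N ∧ x₀ ∉ N ∧ N.IsFinitelyInjective) N := by
  refine (zorn_le_nonempty₀ {N | A ≤ N ∧ x₀ ∉ N ∧ N.IsFinitelyInjective} ?_ A
    ⟨le_rfl, hx₀, hA⟩).imp fun N hN => hN.2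
  intro c hc hchain Z hZ
  refine ⟨sSup c, ⟨(hc hZ).1.trans (le_sSup hZ), fun hx => ?_, fun s hs hsc => ?_⟩,
    fun _ => le_sSup⟩
  · obtain ⟨N, hN, hxN⟩ := exists_mem_subset_of_finite_subset_sSup ⟨Z, hZ⟩ hchain.directedOn
      (Set.finite_singleton x₀) (Set.singleton_subset_iff.mpr hx)
    exact (hc hN).2.1 (hxN rfl)
  · obtain ⟨N, hN, hsN⟩ := exists_mem_subset_of_finite_subset_sSup ⟨Z, hZ⟩ hchain.directedOn hs hsc
    obtain ⟨L, hLN, hL, hsL⟩ := (hc hN).2.2 s hs hsN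
    exact ⟨L, hLN.trans (le_sSup hN), hL, hsL⟩

/-- `B' ⊕ H` is a finitely injective enlargement of `N`, proper since otherwise `H = B`, so by
maximality of `N` it contains `x₀`. -/
theorem mem_sup_of_maximal {A N B B' H : Submodule R E} {x₀ : E}
    (hN : Maximal (fun N : Submodule R E => A ≤ N ∧ x₀ ∉ N ∧ N.IsFinitelyInjective) N)
    (hBN : B ⊔ B' = N) (hB : ¬ Module.Injective R B) (hB' : B'.IsFinitelyInjective)
    (hBH : B ≤ H) (hH : Module.Injective R H) (hB'H : Disjoint B' H) : x₀ ∈ B' ⊔ H := by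
  by_contra hx
  have hNle : N ≤ B' ⊔ H := hBN ▸ sup_comm B B' ▸ sup_le_sup_left hBH B'
  have hleN := hN.le_of_ge ⟨hN.prop.1.trans hNle, hx, hB'.sup hH hB'H⟩ hNle
  have hHB : H = B := calc
    H = H ⊓ (B ⊔ B') := (inf_eq_left.mpr (hBN ▸ le_sup_right.trans hleN)).symm
    _ = B := by rw [inf_comm, sup_inf_assoc_of_le _ hBH, hB'H.eq_bot, sup_bot_eq]
  exact hB (hHB ▸ hH)

theorem exists_not_injective_split_of_isDirectSumOfInjectives {N : Submodule R E}
    (hN : IsDirectSumOfInjectives R N) (hNinj : ¬ Module.Injective R N) :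
    ∃ B₁ B₂ : Submodule R E, Disjoint B₁ B₂ ∧ B₁ ⊔ B₂ = N ∧ B₁.IsFinitelyInjective ∧
      B₂.IsFinitelyInjective ∧ ¬ Module.Injective R B₁ ∧ ¬ Module.Injective R B₂ := by
  obtain ⟨ι, _, p, hpinj, hp⟩ := hN
  obtain ⟨C, hC, hCc⟩ := hp.submodule_iSupIndep.exists_not_injective_biSup_and_compl
    hp.submodule_iSup_eq_top hpinj hNinj
  let B : Set ι → Submodule R E := fun D => (⨆ i ∈ D, p i).map N.subtype
  have hBfin : ∀ D, (B D).IsFinitelyInjective := fun D => by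
    have := (hp.submodule_iSupIndep.comp Subtype.val_injective).isFinitelyInjective_iSup
      fun i : D => hpinj i
    simp only [Function.comp_apply, iSup_subtype''] at this
    exact this.map _ N.injective_subtype
  have hBinj : ∀ D, ¬ Module.Injective R ↥(⨆ i ∈ D, p i) → ¬ Module.Injective R (B D) :=
    fun D h h' => h (h'.of_linearEquiv_s10 (equivMapOfInjective _ N.injective_subtype _).symm)
  refine ⟨B C, B Cᶜ, disjoint_map N.injective_subtype
    (hp.submodule_iSupIndep.disjoint_biSup_biSup disjoint_compl_right), ?_, hBfin C, hBfin Cᶜ,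
    hBinj C hC, hBinj Cᶜ hCc⟩
  rw [← map_sup, ← iSup_union, Set.union_compl_self]
  simp [hp.submodule_iSup_eq_top]

end Submodule

theorem exists_nontrivial_finitelyInjective_of_not_sigmaInjective (R : Type u) [Ring R]
    (M : Type v) [AddCommGroup M] [Module R M] (hMinj : Module.Injective R M)
    (hM : ¬ SigmaInjective R M)
    -- `E` is an injective hull of `M^(ℵ₀)`:
    (E : Type v) [AddCommGroup E] [Module R E] (hEinj : Module.Injective R E)
    (j : (⨁ _ : ℕ, M) →ₗ[R] E) (hj : Function.Injective j)
    (hess : ∀ P : Submodule R E, Disjoint P (LinearMap.range j) → P = ⊥) :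
    ∃ N : Submodule R E, FinitelyInjective R N ∧ ¬ IsDirectSumOfInjectives R N := by
  by_contra! hcon
  obtain ⟨x₀, hx₀⟩ : ∃ x₀, x₀ ∉ LinearMap.range j := by
    by_contra! htop
    exact hM (sigmaInjective_of_injective_directSum_nat hMinj
      (hEinj.of_linearEquiv_s10 (LinearEquiv.ofBijective j ⟨hj, htop⟩).symm))
  obtain ⟨N, hN⟩ := Submodule.exists_maximal_isFinitelyInjective
    (isFinitelyInjective_range_of_directSum_nat hMinj hj) hx₀
  have hNinj : ¬ Module.Injective R N := fun h =>
    hN.prop.2.1 (Submodule.eq_top_of_injective_of_le hess hN.prop.1 h ▸ Submodule.mem_top)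
  obtain ⟨B₁, B₂, hB, hBN, hB₁, hB₂, hB₁inj, hB₂inj⟩ :=
    Submodule.exists_not_injective_split_of_isDirectSumOfInjectives
      (hcon N hN.prop.2.2.finitelyInjective) hNinj
  obtain ⟨H₁, hBH₁, hH₁B₂, hH₁⟩ := Submodule.exists_injective_le_disjoint hEinj hB
  obtain ⟨H₂, hBH₂, hH₂H₁, hH₂⟩ := Submodule.exists_injective_le_disjoint hEinj hH₁B₂.symm
  have hx₁ := Submodule.mem_sup_of_maximal hN hBN hB₁inj hB₂ hBH₁ hH₁ hH₁B₂.symm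
  have hx₂ := Submodule.mem_sup_of_maximal hN ((sup_comm _ _).trans hBN) hB₂inj hB₁ hBH₂ hH₂
    (hH₂H₁.symm.mono_left hBH₁)
  apply hN.prop.2.1
  rw [← hBN, ← sup_inf_sup_eq_of_disjoint hBH₁ hBH₂ hH₂H₁.symm]
  exact ⟨hx₁, hx₂⟩
end

section
/- A ring R is left noetherian if and only if every finitely injective left R-module is injective. -/
open DirectSum

/-!
Over a left noetherian ring Baer's criterion only involves maps from finitely generated left
ideals; the image of such a map is generated by finitely many elements, so it lies in an
injective submodule, into which the map extends.

Conversely, a direct sum of injective modules is finitely injective, since a finite subset lies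
in a finite sub-sum, i.e. a finite product of injectives. So by hypothesis `⨁ n, E n` is
injective whenever `E n` is an injective module containing `R ⧸ c n`, for an ascending chain `c`
of left ideals. The map `x ↦ (x mod c n)ₙ` from `I = ⋃ c n` then extends to `R`, i.e. it is
`x ↦ x • e`. Since `e` has finite support, `I ⊆ c n` for all large `n`, and the chain
stabilizes.
-/

universe u v

open CategoryTheory

section Forward

variable {R : Type u} [Ring R] {M : Type v} [AddCommGroup M] [Module R M]

theorem FinitelyInjective.exists_injective_range_le (hM : FinitelyInjective R M)
    {P : Type*} [AddCommGroup P] [Module R P] [Module.Finite R P] (g : P →ₗ[R] M) :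
    ∃ N : Submodule R M, Module.Injective R N ∧ LinearMap.range g ≤ N := by
  classical
  obtain ⟨T, hT⟩ := Module.Finite.fg_top (R := R) (M := P)
  obtain ⟨N, hN, hTN⟩ := hM (T.image g)
  refine ⟨N, hN, ?_⟩
  rw [LinearMap.range_eq_map, ← hT, Submodule.map_span_le]
  exact fun x hx => hTN _ (Finset.mem_image_of_mem g hx)

theorem FinitelyInjective.baer [IsNoetherianRing R] [Small.{v} R] (hM : FinitelyInjective R M) :
    Module.Baer R M := by
  intro I g
  obtain ⟨N, hN, hg⟩ := hM.exists_injective_range_le g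
  obtain ⟨h, hh⟩ := Module.Baer.of_injective hN I (g.codRestrict N fun x => hg ⟨x, rfl⟩)
  exact ⟨N.subtype ∘ₗ h, fun x hx => congrArg Subtype.val (hh x hx)⟩

end Forward

section DirectSum

variable {R : Type u} [Ring R] {ι : Type*} [DecidableEq ι] {E : ι → Type u}
  [∀ i, AddCommGroup (E i)] [∀ i, Module R (E i)]

theorem finitelyInjective_directSum [∀ i, Module.Injective R (E i)] :
    FinitelyInjective R (⨁ i, E i) := by
  classical
  intro s
  let F := s.biUnion DFinsupp.support
  let Φ := DFinsupp.lmk (R := R) (M := E) F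
  have hΦ : Function.Injective Φ := DFinsupp.mk_injective F
  refine ⟨LinearMap.range Φ, ?_, fun x hx => ⟨fun i => x i, DFinsupp.ext fun i => ?_⟩⟩
  · exact (Module.Baer.of_equiv (LinearEquiv.ofInjective Φ hΦ)
      (Module.Baer.of_injective inferInstance)).injective
  · rw [DFinsupp.lmk_apply, DFinsupp.mk_apply]
    split_ifs with hi
    · rfl
    · by_contra h
      exact hi (Finset.mem_biUnion.mpr ⟨x, hx, DFinsupp.mem_support_iff.mpr (Ne.symm h)⟩)

end DirectSum

theorem DFinsupp.mk_toFinset_apply {ι : Type*} [DecidableEq ι] {β : ι → Type*}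
    [∀ i, Zero (β i)] {f : Π i, β i} (hf : {i | f i ≠ 0}.Finite) (i : ι) :
    DFinsupp.mk hf.toFinset (fun j => f j) i = f i := by
  rw [DFinsupp.mk_apply]
  split_ifs with hi
  · rfl
  · rw [eq_comm]
    simpa using hi

namespace LinearMap

variable {R : Type*} [Semiring R] {P : Type*} [AddCommMonoid P] [Module R P] {ι : Type*}
  [DecidableEq ι] {E : ι → Type*} [∀ i, AddCommMonoid (E i)] [∀ i, Module R (E i)]

noncomputable def toDirectSum (φ : P →ₗ[R] Π i, E i) (hφ : ∀ x, {i | φ x i ≠ 0}.Finite) :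
    P →ₗ[R] ⨁ i, E i where
  toFun x := DFinsupp.mk (hφ x).toFinset fun i => φ x i
  map_add' x y := by
    ext i
    simp only [DirectSum.add_apply, DFinsupp.mk_toFinset_apply]
    exact congrFun (map_add φ x y) i
  map_smul' r x := by
    ext i
    simp only [DirectSum.smul_apply, DFinsupp.mk_toFinset_apply]
    exact congrFun (map_smul φ r x) i

theorem toDirectSum_apply (φ : P →ₗ[R] Π i, E i) (hφ : ∀ x, {i | φ x i ≠ 0}.Finite) (x : P)
    (i : ι) : φ.toDirectSum hφ x i = φ x i :=
  DFinsupp.mk_toFinset_apply (hφ x) i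

end LinearMap

section BassPapp

variable {R : Type u} [Ring R]

theorem Module.Injective.exists_finset_apply_eq_zero {ι : Type*} [DecidableEq ι]
    {E : ι → Type u} [∀ i, AddCommGroup (E i)] [∀ i, Module R (E i)]
    [Module.Injective R (⨁ i, E i)] (I : Ideal R) (ψ : I →ₗ[R] ⨁ i, E i) :
    ∃ F : Finset ι, ∀ x i, i ∉ F → ψ x i = 0 := by
  classical
  obtain ⟨g, hg⟩ := Module.Baer.of_injective ‹_› I ψ
  refine ⟨(g 1).support, fun x i hi => ?_⟩
  have hgx : g x = (x : R) • g 1 := by rw [← map_smul, smul_eq_mul, mul_one]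
  rw [← hg x x.2, hgx, DirectSum.smul_apply, DFinsupp.notMem_support_iff.mp hi, smul_zero]

theorem IsNoetherianRing.of_injective_directSum
    (H : ∀ (E : ℕ → Type u) [∀ n, AddCommGroup (E n)] [∀ n, Module R (E n)]
      [∀ n, Module.Injective R (E n)], Module.Injective R (⨁ n, E n)) :
    IsNoetherianRing R := by
  rw [isNoetherianRing_iff, ← monotone_stabilizes_iff_noetherian]
  intro c
  let E n := Injective.under (ModuleCat.of R (R ⧸ c n))
  have (n : ℕ) : Module.Injective R (E n) :=
    Module.injective_module_of_injective_object R _ (inj := inferInstanceAs (Injective (E n)))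
  let ι n : (R ⧸ c n) →ₗ[R] E n := (Injective.ι (ModuleCat.of R (R ⧸ c n))).hom
  have hι n : Function.Injective (ι n) := (ModuleCat.mono_iff_injective _).mp inferInstance
  let I := ⨆ n, c n
  let φ : I →ₗ[R] Π n, E n := LinearMap.pi fun n => ι n ∘ₗ (c n).mkQ ∘ₗ I.subtype
  have hφ (x : I) n : φ x n = 0 ↔ (x : R) ∈ c n := by
    change ι n (Submodule.Quotient.mk (x : R)) = 0 ↔ _
    rw [map_eq_zero_iff _ (hι n), Submodule.Quotient.mk_eq_zero]
  have hfin (x : I) : {n | φ x n ≠ 0}.Finite := by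
    obtain ⟨k, hk⟩ := (Submodule.mem_iSup_of_chain c x).mp x.2
    refine (Set.finite_lt_nat k).subset fun n hn => ?_
    by_contra hkn
    exact hn ((hφ x n).mpr (c.monotone (not_lt.mp hkn) hk))
  have : Module.Injective R (⨁ n, E n) := H _
  obtain ⟨F, hF⟩ := Module.Injective.exists_finset_apply_eq_zero I (φ.toDirectSum hfin)
  obtain ⟨n₀, hn₀⟩ := F.exists_nat_subset_range
  refine ⟨n₀, fun m hm => le_antisymm (c.monotone hm) ((le_iSup c m).trans fun y hy => ?_)⟩
  refine (hφ ⟨y, hy⟩ n₀).mp ?_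
  rw [← φ.toDirectSum_apply hfin]
  exact hF _ _ fun h => by simpa using hn₀ h

end BassPapp

theorem isNoetherianRing_iff_finitelyInjective_imp_injective (R : Type u) [Ring R] :
    IsNoetherianRing R ↔
      ∀ (M : Type u) [AddCommGroup M] [Module R M],
        FinitelyInjective R M → Module.Injective R M := by
  refine ⟨fun _ M _ _ hM => hM.baer.injective, fun H => ?_⟩
  exact IsNoetherianRing.of_injective_directSum fun E _ _ _ => H _ finitelyInjective_directSum
end

section
/- If R is left noetherian, then every finitely injective left R-module is injective. -/
open DirectSum

theorem finitelyInjective_imp_injective_of_noetherian (R : Type u) [Ring R]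
    [IsNoetherianRing R] (M : Type v) [AddCommGroup M] [Module R M]
    (hM : FinitelyInjective R M) : Module.Injective R M := by
  classical
  constructor
  intro X Y _ _ _ _ i hi f
  haveI : Fact (Function.Injective i) := ⟨hi⟩
  set F := Module.Baer.extensionOfMax i f with hF
  have htop : F.domain = ⊤ := by
    rw [eq_top_iff]
    rintro y -
    by_contra hy
    set I : Ideal R := Module.Baer.ExtensionOfMaxAdjoin.ideal i f y with hI
    obtain ⟨s, hs⟩ := IsNoetherian.noetherian I
    set φ : I →ₗ[R] M := Module.Baer.ExtensionOfMaxAdjoin.idealTo i f y with hφ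
    obtain ⟨N, hNinj, hNmem⟩ := hM (s.image fun r =>
      if h : r ∈ I then φ ⟨r, h⟩ else 0)
    -- every value of φ lands in N
    have hφN : ∀ r : I, φ r ∈ N := by
      rintro ⟨r, hr⟩
      have hr' : r ∈ Submodule.span R (s : Set R) := hs.symm ▸ hr
      refine Submodule.span_induction
        (p := fun x _ => ∀ (h : x ∈ I), φ ⟨x, h⟩ ∈ N) ?_ ?_ ?_ ?_ hr' hr
      · intro x hx h
        have := hNmem _ (Finset.mem_image_of_mem
          (fun r => if h : r ∈ I then φ ⟨r, h⟩ else 0) hx)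
        simpa only [dif_pos h] using this
      · intro h
        have e : (⟨0, h⟩ : I) = 0 := rfl
        rw [e, map_zero]; exact N.zero_mem
      · intro a b ha hb pa pb h
        have haI : a ∈ I := hs ▸ ha
        have hbI : b ∈ I := hs ▸ hb
        have e : (⟨a + b, h⟩ : I) = ⟨a, haI⟩ + ⟨b, hbI⟩ := rfl
        rw [e, map_add]; exact N.add_mem (pa haI) (pb hbI)
      · intro c a ha pa h
        have haI : a ∈ I := hs ▸ ha
        have e : (⟨c • a, h⟩ : I) = c • (⟨a, haI⟩ : I) := rfl
        rw [e, map_smul]; exact N.smul_mem c (pa haI)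
    set C : Submodule R Y :=
      Submodule.map ((LinearMap.id : R →ₗ[R] R).smulRight y) I with hC
    have hCD : C ≤ F.domain := by
      rintro _ ⟨r, hrI, rfl⟩; exact hrI
    have hCy : C ≤ Submodule.span R {y} := by
      rintro _ ⟨r, hrI, rfl⟩
      exact Submodule.mem_span_singleton.mpr ⟨r, rfl⟩
    set ψ0 : C →ₗ[R] M := F.toLinearPMap.toFun ∘ₗ Submodule.inclusion hCD with hψ0def
    have hψ0 : ∀ c : C, ψ0 c ∈ N := by
      rintro ⟨_, r, hrI, rfl⟩
      exact hφN ⟨r, hrI⟩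
    set ψ : C →ₗ[R] N := LinearMap.codRestrict N ψ0 hψ0 with hψdef
    obtain ⟨k, hk⟩ := hNinj.out (Submodule.inclusion hCy)
      (Submodule.inclusion_injective hCy) ψ
    set G : Y →ₗ.[R] M := ⟨Submodule.span R {y}, N.subtype ∘ₗ k⟩ with hG
    have hagree : ∀ (a : F.toLinearPMap.domain) (b : G.domain),
        (a : Y) = (b : Y) → F.toLinearPMap a = G b := by
      rintro ⟨a, ha⟩ ⟨b, hb⟩ e
      simp only at e
      subst e
      obtain ⟨r, hr⟩ := Submodule.mem_span_singleton.mp hb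
      have hrI : r ∈ I := by
        show r • y ∈ F.domain
        rw [hr]; exact ha
      have hc : a ∈ C := ⟨r, hrI, hr⟩
      have hkc := hk ⟨a, hc⟩
      show F.toLinearPMap ⟨a, ha⟩ = N.subtype (k ⟨a, hb⟩)
      rw [show (⟨a, hb⟩ : Submodule.span R ({y} : Set Y))
          = Submodule.inclusion hCy ⟨a, hc⟩ from rfl, hkc]
      rfl
    set S := F.toLinearPMap.sup G hagree with hS
    set E : Module.Baer.ExtensionOf i f :=
      { toLinearPMap := S
        le := F.le.trans (by rw [hS, LinearPMap.domain_sup]; exact le_sup_left)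
        is_extension := fun m => by
          rw [F.is_extension m]
          exact (F.toLinearPMap.left_le_sup G hagree).2 rfl } with hE
    have hle : F ≤ E := F.toLinearPMap.left_le_sup G hagree
    have hmax := Module.Baer.extensionOfMax_is_max i f E hle
    apply hy
    have hymem : y ∈ E.domain := by
      show y ∈ S.domain
      rw [hS, LinearPMap.domain_sup]
      exact Submodule.mem_sup_right (Submodule.mem_span_singleton_self y)
    rw [hmax] at hymem
    exact hymem
  refine ⟨{ toFun := fun x => F.toLinearPMap ⟨x, htop ▸ Submodule.mem_top⟩
            map_add' := fun a b => by rw [← LinearPMap.map_add]; congr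
            map_smul' := fun r a => by rw [← LinearPMap.map_smul]; dsimp },
    fun x => (F.is_extension x).symm⟩
end

section
/- Let N be a finitely injective left R-module and A a direct summand of N, say N = A ⊕ E. Then for every x ∈ N, writing x = a + e with a ∈ A, e ∈ E, there exists an injective submodule L of E containing e; hence every element of N lies in a submodule of the form A' ⊕ K with A' ≤ A and K ≤ E injective. -/
universe u v

section Aux

variable {R : Type u} [Ring R]

/-- A retract of an injective module is injective. -/
lemma Module.Injective.of_retract' {M H : Type v} [AddCommGroup M] [Module R M]
    [AddCommGroup H] [Module R H] (i : H →ₗ[R] M) (ρ : M →ₗ[R] H)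
    (hρ : ∀ h, ρ (i h) = h) (hM : Module.Injective R M) : Module.Injective R H where
  out X Y _ _ _ _ f hf g := by
    obtain ⟨φ, hφ⟩ := hM.out f hf (i ∘ₗ g)
    refine ⟨ρ ∘ₗ φ, fun x => ?_⟩
    have := hφ x
    simp only [LinearMap.comp_apply] at this ⊢
    rw [this, hρ]

variable {N : Type v} [AddCommGroup N] [Module R N]

/-- Inside an injective submodule `M` of `N`, every submodule `S` has an essential
extension `H ≤ M` which is itself injective (an "internal injective hull"). -/
lemma exists_injective_essential_ext (M : Submodule R N) (hM : Module.Injective R M)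
    (S : Submodule R N) (hSM : S ≤ M) :
    ∃ H : Submodule R N, S ≤ H ∧ H ≤ M ∧ Module.Injective R H ∧
      ∀ y ∈ H, y ≠ 0 → ∃ r : R, r • y ∈ S ∧ r • y ≠ 0 := by
  classical
  -- `sH` : essential extensions of `S` inside `M`
  set sH : Set (Submodule R N) :=
    {K | S ≤ K ∧ K ≤ M ∧ ∀ y ∈ K, y ≠ 0 → ∃ r : R, r • y ∈ S ∧ r • y ≠ 0} with hsH
  have hSmem : S ∈ sH := ⟨le_rfl, hSM, fun y hy hy0 => ⟨1, by simpa using hy, by simpa using hy0⟩⟩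
  have hzorn1 : ∀ c ⊆ sH, IsChain (· ≤ ·) c → ∀ y ∈ c, ∃ ub ∈ sH, ∀ z ∈ c, z ≤ ub := by
    intro c hcs hc y hyc
    refine ⟨sSup c, ⟨le_trans (hcs hyc).1 (le_sSup hyc), sSup_le fun z hz => (hcs hz).2.1,
      ?_⟩, fun z hz => le_sSup hz⟩
    intro w hw hw0
    obtain ⟨z, hzc, hwz⟩ := (Submodule.mem_sSup_of_directed ⟨y, hyc⟩ hc.directedOn).mp hw
    exact (hcs hzc).2.2 w hwz hw0
  obtain ⟨H, hSH, hHmax⟩ := zorn_le_nonempty₀ sH hzorn1 S hSmem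
  obtain ⟨hSH', hHM, hess⟩ := hHmax.1
  -- `T` : a maximal complement of `H` in `M`
  set sT : Set (Submodule R N) := {K | K ≤ M ∧ K ⊓ H = ⊥} with hsT
  have hbotT : (⊥ : Submodule R N) ∈ sT := ⟨bot_le, by simp⟩
  have hzorn2 : ∀ c ⊆ sT, IsChain (· ≤ ·) c → ∀ y ∈ c, ∃ ub ∈ sT, ∀ z ∈ c, z ≤ ub := by
    intro c hcs hc y hyc
    refine ⟨sSup c, ⟨sSup_le fun z hz => (hcs hz).1, ?_⟩, fun z hz => le_sSup hz⟩
    refine eq_bot_iff.mpr fun w hw => ?_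
    obtain ⟨hw1, hw2⟩ := Submodule.mem_inf.mp hw
    obtain ⟨z, hzc, hwz⟩ := (Submodule.mem_sSup_of_directed ⟨y, hyc⟩ hc.directedOn).mp hw1
    exact (hcs hzc).2 ▸ Submodule.mem_inf.mpr ⟨hwz, hw2⟩
  obtain ⟨T, -, hTmax⟩ := zorn_le_nonempty₀ sT hzorn2 ⊥ hbotT
  obtain ⟨hTM, hTH⟩ := hTmax.1
  have hHT : H ⊓ T = ⊥ := by rw [inf_comm]; exact hTH
  -- the quotient `M / T` and the canonical maps
  set T' : Submodule R ↥M := T.comap M.subtype with hT'def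
  set iH : ↥H →ₗ[R] ↥M := Submodule.inclusion hHM with hiHdef
  set j : ↥H →ₗ[R] (↥M ⧸ T') := T'.mkQ ∘ₗ iH with hjdef
  have hiHcoe : ∀ h : ↥H, ((iH h : ↥M) : N) = (h : N) := fun h => rfl
  have hj0 : ∀ h : ↥H, j h = 0 → h = 0 := by
    intro h hh
    have h1 : iH h ∈ T' := by
      rwa [hjdef, LinearMap.comp_apply, Submodule.mkQ_apply, Submodule.Quotient.mk_eq_zero] at hh
    have h2 : (h : N) ∈ H ⊓ T := Submodule.mem_inf.mpr ⟨h.2, h1⟩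
    rw [hHT, Submodule.mem_bot] at h2
    exact Subtype.ext h2
  have hj : Function.Injective j := by
    intro a b hab
    have := hj0 (a - b) (by rw [map_sub, hab, sub_self])
    exact sub_eq_zero.mp this
  -- the image of `H` is essential in `M / T`
  have hessj : ∀ x : ↥M ⧸ T', x ≠ 0 → ∃ r : R, r • x ∈ LinearMap.range j ∧ r • x ≠ 0 := by
    intro x hx
    obtain ⟨m, rfl⟩ := T'.mkQ_surjective x
    have hmT : (m : N) ∉ T := by
      intro hmem
      exact hx (by rwa [Submodule.mkQ_apply, Submodule.Quotient.mk_eq_zero])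
    set T2 : Submodule R N := T ⊔ Submodule.span R {(m : N)} with hT2def
    have hT2M : T2 ≤ M := sup_le hTM (Submodule.span_le.mpr (by simpa using m.2))
    have hT2 : T2 ⊓ H ≠ ⊥ := by
      intro hbot
      exact hmT (hTmax.2 ⟨hT2M, hbot⟩ le_sup_left
        (Submodule.mem_sup_right (Submodule.mem_span_singleton_self _)))
    obtain ⟨h0, hh0, h0ne⟩ := Submodule.exists_mem_ne_zero_of_ne_bot hT2
    obtain ⟨hh0T2, hh0H⟩ := Submodule.mem_inf.mp hh0
    obtain ⟨t, ht, y, hy, hty⟩ := Submodule.mem_sup.mp hh0T2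
    obtain ⟨r, rfl⟩ := Submodule.mem_span_singleton.mp hy
    have hrm : r • (m : N) = h0 - t := by rw [← hty]; abel
    refine ⟨r, ⟨⟨h0, hh0H⟩, ?_⟩, ?_⟩
    · rw [hjdef, LinearMap.comp_apply, Submodule.mkQ_apply, ← map_smul, Submodule.mkQ_apply,
        Submodule.Quotient.eq]
      refine Submodule.mem_comap.mpr ?_
      have : ((iH ⟨h0, hh0H⟩ - r • m : ↥M) : N) = h0 - r • (m : N) := by
        simp [hiHcoe]
      rw [Submodule.coe_subtype, this, hrm]
      simpa using ht
    · intro hzero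
      rw [← map_smul, Submodule.mkQ_apply, Submodule.Quotient.mk_eq_zero] at hzero
      have : r • (m : N) ∈ T := hzero
      have h0T : h0 ∈ T := by
        rw [← hty]; exact Submodule.add_mem _ ht this
      have : h0 ∈ H ⊓ T := Submodule.mem_inf.mpr ⟨hh0H, h0T⟩
      rw [hHT, Submodule.mem_bot] at this
      exact h0ne this
  -- extend the inclusion `H ↪ M` along the essential embedding `j : H ↪ M/T`
  obtain ⟨φ, hφ⟩ := hM.out j hj iH
  have hφ0 : ∀ x, φ x = 0 → x = 0 := by
    intro x hx
    by_contra hx0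
    obtain ⟨r, ⟨h', hh'⟩, hne⟩ := hessj x hx0
    have h1 : φ (r • x) = 0 := by rw [map_smul, hx, smul_zero]
    rw [← hh', hφ h'] at h1
    have : h' = 0 := by
      have := congrArg (fun z : ↥M => (z : N)) h1
      exact Subtype.ext (by simpa [hiHcoe] using this)
    exact hne (by rw [← hh', this, map_zero])
  have hφinj : Function.Injective φ := by
    intro a b hab
    exact sub_eq_zero.mp (hφ0 (a - b) (by rw [map_sub, hab, sub_self]))
  set W : Submodule R N := LinearMap.range (M.subtype ∘ₗ φ) with hWdef
  have hHW : H ≤ W := by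
    intro h hh
    exact ⟨j ⟨h, hh⟩, by rw [LinearMap.comp_apply, hφ]; rfl⟩
  have hWM : W ≤ M := by
    rintro w ⟨x, rfl⟩
    exact (φ x).2
  have hessHW : ∀ y ∈ W, y ≠ 0 → ∃ r : R, r • y ∈ H ∧ r • y ≠ 0 := by
    rintro _ ⟨x, rfl⟩ hy0
    have hx0 : x ≠ 0 := by rintro rfl; simp at hy0
    obtain ⟨r, ⟨h', hh'⟩, hne⟩ := hessj x hx0
    have key : r • ((M.subtype ∘ₗ φ) x) = (h' : N) := by
      rw [← map_smul, ← hh', LinearMap.comp_apply, hφ]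
      exact hiHcoe h'
    have h'ne : h' ≠ 0 := by
      rintro rfl
      rw [map_zero] at hh'
      exact hne hh'.symm
    refine ⟨r, ?_, ?_⟩
    · rw [key]; exact h'.2
    · rw [key]
      exact fun hz => h'ne (Subtype.ext hz)
  have hWmem : W ∈ sH := by
    refine ⟨hSH'.trans hHW, hWM, fun y hy hy0 => ?_⟩
    obtain ⟨r1, hr1H, hr1ne⟩ := hessHW y hy hy0
    obtain ⟨r2, hr2S, hr2ne⟩ := hess _ hr1H hr1ne
    exact ⟨r2 * r1, by rwa [mul_smul], by rwa [mul_smul]⟩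
  have hWH : W = H := le_antisymm (hHmax.2 hWmem hHW) hHW
  -- conclude `M ≤ H ⊔ T`
  have hsup : ∀ m : ↥M, (m : N) ∈ H ⊔ T := by
    intro m
    have h1 : ((φ (T'.mkQ m) : ↥M) : N) ∈ H := by
      rw [← hWH]
      exact ⟨T'.mkQ m, rfl⟩
    have h2 : φ (j ⟨((φ (T'.mkQ m) : ↥M) : N), h1⟩) = φ (T'.mkQ m) := by
      rw [hφ]; exact Subtype.ext rfl
    have h3 : j ⟨((φ (T'.mkQ m) : ↥M) : N), h1⟩ = T'.mkQ m := hφinj h2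
    have h4 : m - iH ⟨((φ (T'.mkQ m) : ↥M) : N), h1⟩ ∈ T' := by
      rw [← Submodule.Quotient.mk_eq_zero T', ← Submodule.mkQ_apply, map_sub]
      rw [hjdef, LinearMap.comp_apply] at h3
      rw [h3, sub_self]
    have h5 : (m : N) - ((φ (T'.mkQ m) : ↥M) : N) ∈ T := by
      have := Submodule.mem_comap.mp h4
      simpa [hiHcoe] using this
    have : (m : N) = ((φ (T'.mkQ m) : ↥M) : N) + ((m : N) - ((φ (T'.mkQ m) : ↥M) : N)) := by
      abel
    rw [this]
    exact Submodule.add_mem _ (Submodule.mem_sup_left h1) (Submodule.mem_sup_right h5)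
  -- `H` is a direct summand of `M`, hence injective
  have hcompl : IsCompl (H.comap M.subtype) (T.comap M.subtype) := by
    constructor
    · rw [disjoint_iff, eq_bot_iff]
      intro m hm
      obtain ⟨hm1, hm2⟩ := Submodule.mem_inf.mp hm
      have : (m : N) ∈ H ⊓ T := Submodule.mem_inf.mpr ⟨hm1, hm2⟩
      rw [hHT, Submodule.mem_bot] at this
      exact Submodule.mem_bot _ |>.mpr (Subtype.ext this)
    · rw [codisjoint_iff, eq_top_iff]
      intro m _
      obtain ⟨h, hh, t, ht, hht⟩ := Submodule.mem_sup.mp (hsup m)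
      refine Submodule.mem_sup.mpr ⟨⟨h, hHM hh⟩, hh, ⟨t, hTM ht⟩, ht, ?_⟩
      exact Subtype.ext hht
  set ρ : ↥M →ₗ[R] ↥H :=
    (Submodule.comapSubtypeEquivOfLe hHM).toLinearMap ∘ₗ
      Submodule.linearProjOfIsCompl _ _ hcompl with hρdef
  have hρ : ∀ h : ↥H, ρ (iH h) = h := by
    intro h
    have hmem : iH h ∈ H.comap M.subtype := h.2
    have h1 : Submodule.linearProjOfIsCompl _ _ hcompl (iH h) = ⟨iH h, hmem⟩ :=
      Submodule.linearProjOfIsCompl_apply_left hcompl ⟨iH h, hmem⟩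
    rw [hρdef, LinearMap.comp_apply, h1]
    exact Subtype.ext rfl
  exact ⟨H, hSH', hHM, Module.Injective.of_retract' iH ρ hρ hM, hess⟩

end Aux




theorem exists_injective_summand_through_element (R : Type*) [Ring R] {N : Type*}
    [AddCommGroup N] [Module R N] (hN : FinitelyInjective R N)
    (A E : Submodule R N) (hAE : IsCompl A E) (x : N) :
    ∃ (a : N) (e : N), a ∈ A ∧ e ∈ E ∧ x = a + e ∧
      ∃ L : Submodule R N, L ≤ E ∧ Module.Injective R L ∧ e ∈ L ∧ x ∈ A ⊔ L := by
  have hxtop : x ∈ A ⊔ E := by rw [hAE.codisjoint.eq_top]; trivial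
  obtain ⟨a, haA, e, heE, hx⟩ := Submodule.mem_sup.mp hxtop
  refine ⟨a, e, haA, heE, hx.symm, ?_⟩
  obtain ⟨M, hMinj, hMmem⟩ := hN {e}
  have heM : e ∈ M := hMmem e (Finset.mem_singleton_self e)
  set S := Submodule.span R ({e} : Set N) with hSdef
  have hSM : S ≤ M := Submodule.span_le.mpr (by simpa using heM)
  have hSE : S ≤ E := Submodule.span_le.mpr (by simpa using heE)
  obtain ⟨H, hSH, hHM, hHinj, hess⟩ := exists_injective_essential_ext M hMinj S hSM
  have heH : e ∈ H := hSH (Submodule.mem_span_singleton_self e)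
  have hHA : ∀ y, y ∈ H → y ∈ A → y = 0 := by
    intro y hyH hyA
    by_contra hy0
    obtain ⟨r, hrS, hrne⟩ := hess y hyH hy0
    have h1 : r • y ∈ E := hSE hrS
    have h2 : r • y ∈ A := Submodule.smul_mem _ _ hyA
    have : r • y ∈ (⊥ : Submodule R N) := hAE.disjoint.le_bot (Submodule.mem_inf.mpr ⟨h2, h1⟩)
    exact hrne (Submodule.mem_bot R |>.mp this)
  set pE : N →ₗ[R] ↥E := Submodule.linearProjOfIsCompl E A hAE.symm with hpEdef
  set q : N →ₗ[R] N := E.subtype ∘ₗ pE with hqdef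
  set L : Submodule R N := H.map q with hLdef
  have hqE : ∀ y ∈ E, q y = y := by
    intro y hy
    have : pE y = ⟨y, hy⟩ := Submodule.linearProjOfIsCompl_apply_left hAE.symm ⟨y, hy⟩
    rw [hqdef, LinearMap.comp_apply, this]; rfl
  have heL : e ∈ L := ⟨e, heH, hqE e heE⟩
  have hLE : L ≤ E := by
    rintro _ ⟨h, hh, rfl⟩
    exact (pE h).2
  refine ⟨L, hLE, ?_, heL, ?_⟩
  · -- `L` is isomorphic to `H`, hence injective
    set ψ0 : ↥H →ₗ[R] ↥L := (q ∘ₗ H.subtype).codRestrict L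
      (fun h => Submodule.mem_map_of_mem h.2) with hψ0def
    have hinj : Function.Injective ψ0 := by
      intro h1 h2 hh
      have hcoe : q (h1 : N) = q (h2 : N) := congrArg (fun z : ↥L => (z : N)) hh
      have hsub : q ((h1 : N) - (h2 : N)) = 0 := by rw [map_sub, hcoe, sub_self]
      have hker : pE ((h1 : N) - (h2 : N)) = 0 := by
        have := hsub
        rw [hqdef, LinearMap.comp_apply] at this
        exact Subtype.ext (by simpa using this)
      have hA : (h1 : N) - (h2 : N) ∈ A :=
        (Submodule.linearProjOfIsCompl_apply_eq_zero_iff hAE.symm).mp hker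
      have hH12 : (h1 : N) - (h2 : N) ∈ H := Submodule.sub_mem _ h1.2 h2.2
      have := hHA _ hH12 hA
      exact Subtype.ext (sub_eq_zero.mp this)
    have hsurj : Function.Surjective ψ0 := by
      rintro ⟨_, h, hh, rfl⟩
      exact ⟨⟨h, hh⟩, rfl⟩
    set ψ : ↥H ≃ₗ[R] ↥L := LinearEquiv.ofBijective ψ0 ⟨hinj, hsurj⟩ with hψdef
    exact Module.Injective.of_retract' ψ.symm.toLinearMap ψ.toLinearMap
      (fun l => ψ.apply_symm_apply l) hHinj
  · rw [← hx]
    exact Submodule.add_mem _ (Submodule.mem_sup_left haA) (Submodule.mem_sup_right heL)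
end
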